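/- arXiv:2011.06397 — 8 statements merged into one kernel-verified Lean document; each statement's English description precedes it below -/
import Mathlib

section
/- For every $0 < C_- \le C_+ < +\infty$ and every vertex $v \in V$, one has $\sup_{q \in [C_-, C_+]^V} \left| \pi^{Nq}(\sigma_v = 1) - \bar\pi^q(v) \right| \to 0$ as $N \to +\infty$ (with $N$ ranging over the positive integers). -/
open Finset

/-- The set of stable (independent) sets of a finite graph `G`, viewed as finsets of
vertices. -/
def stableSets {V : Type*} [Fintype V] [DecidableEq V] (G : SimpleGraph V)
    [DecidableRel G.Adj] : Finset (Finset V) :=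
  Finset.univ.filter fun S => ∀ v ∈ S, ∀ w ∈ S, ¬ G.Adj v w

/-- `π^q(σ_v = 1)`: the stationary probability that node `v` is active, for the
QB-CSMA activity dynamics with queue-length vector `q` and exponent `a`. -/
noncomputable def piActive {V : Type*} [Fintype V] [DecidableEq V] (G : SimpleGraph V)
    [DecidableRel G.Adj] (a : ℝ) (q : V → ℝ) (v : V) : ℝ :=
  (∑ S ∈ (stableSets G).filter (fun S => v ∈ S), ∏ w ∈ S, (1 + q w) ^ a) /
    ∑ S ∈ stableSets G, ∏ w ∈ S, (1 + q w) ^ a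

/-- The stable sets of maximal size. -/
def maxStableSets {V : Type*} [Fintype V] [DecidableEq V] (G : SimpleGraph V)
    [DecidableRel G.Adj] : Finset (Finset V) :=
  (stableSets G).filter fun S => S.card = (stableSets G).sup Finset.card

/-- `π̄^q(v)`: the asymptotic service rate of node `v`. -/
noncomputable def piBar {V : Type*} [Fintype V] [DecidableEq V] (G : SimpleGraph V)
    [DecidableRel G.Adj] (a : ℝ) (q : V → ℝ) (v : V) : ℝ :=
  (∑ S ∈ (maxStableSets G).filter (fun S => v ∈ S), ∏ w ∈ S, q w ^ a) /
    ∑ S ∈ maxStableSets G, ∏ w ∈ S, q w ^ a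

/-- Auxiliary function: the rescaled version of `piActive` as a function of `t = 1/N`
and the queue vector `q`. -/
noncomputable def gAux {V : Type*} [Fintype V] [DecidableEq V] (G : SimpleGraph V)
    [DecidableRel G.Adj] (a : ℝ) (v : V) (p : ℝ × (V → ℝ)) : ℝ :=
  (∑ S ∈ (stableSets G).filter (fun S => v ∈ S),
      p.1 ^ (a * (((stableSets G).sup Finset.card - S.card : ℕ) : ℝ)) *
        ∏ w ∈ S, (p.2 w + p.1) ^ a) /
  (∑ S ∈ stableSets G,
      p.1 ^ (a * (((stableSets G).sup Finset.card - S.card : ℕ) : ℝ)) *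
        ∏ w ∈ S, (p.2 w + p.1) ^ a)

lemma stableSets_nonempty {V : Type*} [Fintype V] [DecidableEq V] (G : SimpleGraph V)
    [DecidableRel G.Adj] : (stableSets G).Nonempty :=
  ⟨∅, by simp [stableSets]⟩

lemma card_le_sup_of_mem_stableSets {V : Type*} [Fintype V] [DecidableEq V]
    {G : SimpleGraph V} [DecidableRel G.Adj] {S : Finset V} (hS : S ∈ stableSets G) :
    S.card ≤ (stableSets G).sup Finset.card :=
  Finset.le_sup hS

/-- Term identity: each term of `piActive (N • q)` factors as `N^{aΥ}` times the
corresponding term of `gAux` at `t = 1/N`. -/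
lemma term_eq {V : Type*} [Fintype V] [DecidableEq V] (G : SimpleGraph V)
    [DecidableRel G.Adj] (a : ℝ) {N : ℕ} (hN : 1 ≤ N) (q : V → ℝ)
    (hq : ∀ w, 0 ≤ q w) {S : Finset V} (hS : S ∈ stableSets G) :
    ∏ w ∈ S, (1 + (N : ℝ) * q w) ^ a =
      (N : ℝ) ^ (a * (((stableSets G).sup Finset.card : ℕ) : ℝ)) *
        (((N : ℝ)⁻¹) ^ (a * (((stableSets G).sup Finset.card - S.card : ℕ) : ℝ)) *
          ∏ w ∈ S, (q w + (N : ℝ)⁻¹) ^ a) := by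
  have hN0 : (0:ℝ) < (N : ℝ) := by positivity
  have hinv : ((N : ℝ)⁻¹) ^ (a * (((stableSets G).sup Finset.card - S.card : ℕ) : ℝ))
      = (N : ℝ) ^ (-(a * (((stableSets G).sup Finset.card - S.card : ℕ) : ℝ))) := by
    rw [Real.inv_rpow hN0.le, ← Real.rpow_neg hN0.le]
  rw [hinv, ← mul_assoc, ← Real.rpow_add hN0]
  have hcard : S.card ≤ (stableSets G).sup Finset.card := card_le_sup_of_mem_stableSets hS
  have hexp : a * (((stableSets G).sup Finset.card : ℕ) : ℝ) +
      -(a * (((stableSets G).sup Finset.card - S.card : ℕ) : ℝ)) = a * S.card := by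
    rw [Nat.cast_sub hcard]; ring
  rw [hexp]
  have hfac : ∀ w ∈ S, (1 + (N : ℝ) * q w) ^ a = (N : ℝ) ^ a * (q w + (N : ℝ)⁻¹) ^ a := by
    intro w _
    rw [← Real.mul_rpow hN0.le (add_nonneg (hq w) (by positivity))]
    congr 1
    field_simp
    ring
  rw [Finset.prod_congr rfl hfac, Finset.prod_mul_distrib, Finset.prod_const,
    ← Real.rpow_natCast ((N:ℝ) ^ a) S.card, ← Real.rpow_mul hN0.le]

lemma piActive_eq_gAux {V : Type*} [Fintype V] [DecidableEq V] (G : SimpleGraph V)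
    [DecidableRel G.Adj] (a : ℝ) (v : V) {N : ℕ} (hN : 1 ≤ N) (q : V → ℝ)
    (hq : ∀ w, 0 ≤ q w) :
    piActive G a (fun w => (N : ℝ) * q w) v = gAux G a v ((N : ℝ)⁻¹, q) := by
  have hN0 : (0:ℝ) < (N : ℝ) := by positivity
  unfold piActive gAux
  have h1 : ∑ S ∈ (stableSets G).filter (fun S => v ∈ S), ∏ w ∈ S, (1 + (N:ℝ) * q w) ^ a
      = (N : ℝ) ^ (a * (((stableSets G).sup Finset.card : ℕ) : ℝ)) *
        ∑ S ∈ (stableSets G).filter (fun S => v ∈ S),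
          (((N : ℝ)⁻¹) ^ (a * (((stableSets G).sup Finset.card - S.card : ℕ) : ℝ)) *
            ∏ w ∈ S, (q w + (N : ℝ)⁻¹) ^ a) := by
    rw [Finset.mul_sum]
    refine Finset.sum_congr rfl fun S hS => ?_
    exact term_eq G a hN q hq (Finset.mem_filter.mp hS).1
  have h2 : ∑ S ∈ stableSets G, ∏ w ∈ S, (1 + (N:ℝ) * q w) ^ a
      = (N : ℝ) ^ (a * (((stableSets G).sup Finset.card : ℕ) : ℝ)) *
        ∑ S ∈ stableSets G,
          (((N : ℝ)⁻¹) ^ (a * (((stableSets G).sup Finset.card - S.card : ℕ) : ℝ)) *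
            ∏ w ∈ S, (q w + (N : ℝ)⁻¹) ^ a) := by
    rw [Finset.mul_sum]
    exact Finset.sum_congr rfl fun S hS => term_eq G a hN q hq hS
  rw [h1, h2, mul_div_mul_left _ _ (by positivity)]

lemma gAux_zero_eq_piBar {V : Type*} [Fintype V] [DecidableEq V] (G : SimpleGraph V)
    [DecidableRel G.Adj] {a : ℝ} (ha : 0 < a) (v : V) (q : V → ℝ) :
    gAux G a v (0, q) = piBar G a q v := by
  unfold gAux piBar
  have hterm : ∀ S ∈ stableSets G,
      (0:ℝ) ^ (a * (((stableSets G).sup Finset.card - S.card : ℕ) : ℝ)) *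
        ∏ w ∈ S, (q w + 0) ^ a =
      if S.card = (stableSets G).sup Finset.card then ∏ w ∈ S, q w ^ a else 0 := by
    intro S hS
    by_cases h : S.card = (stableSets G).sup Finset.card
    · simp [h]
    · have hlt : S.card < (stableSets G).sup Finset.card :=
        lt_of_le_of_ne (card_le_sup_of_mem_stableSets hS) h
      have hne : a * (((stableSets G).sup Finset.card - S.card : ℕ) : ℝ) ≠ 0 := by
        have : 0 < (stableSets G).sup Finset.card - S.card := Nat.sub_pos_of_lt hlt
        positivity
      simp [Real.zero_rpow hne, h]
  have hnum : ∑ S ∈ (stableSets G).filter (fun S => v ∈ S),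
      (0:ℝ) ^ (a * (((stableSets G).sup Finset.card - S.card : ℕ) : ℝ)) *
        ∏ w ∈ S, (q w + 0) ^ a =
      ∑ S ∈ (maxStableSets G).filter (fun S => v ∈ S), ∏ w ∈ S, q w ^ a := by
    have e1 : (maxStableSets G).filter (fun S => v ∈ S)
        = ((stableSets G).filter (fun S => v ∈ S)).filter
            (fun S => S.card = (stableSets G).sup Finset.card) := by
      ext S
      simp only [maxStableSets, Finset.mem_filter, Finset.filter_filter]
      tauto
    calc ∑ S ∈ (stableSets G).filter (fun S => v ∈ S),
          (0:ℝ) ^ (a * (((stableSets G).sup Finset.card - S.card : ℕ) : ℝ)) *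
            ∏ w ∈ S, (q w + 0) ^ a
        = ∑ S ∈ (stableSets G).filter (fun S => v ∈ S),
            (if S.card = (stableSets G).sup Finset.card then ∏ w ∈ S, q w ^ a else 0) :=
          Finset.sum_congr rfl fun S hS => hterm S (Finset.mem_filter.mp hS).1
      _ = ∑ S ∈ ((stableSets G).filter (fun S => v ∈ S)).filter
            (fun S => S.card = (stableSets G).sup Finset.card), ∏ w ∈ S, q w ^ a :=
          (Finset.sum_filter _ _).symm
      _ = ∑ S ∈ (maxStableSets G).filter (fun S => v ∈ S), ∏ w ∈ S, q w ^ a := by rw [e1]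
  have hden : ∑ S ∈ stableSets G,
      (0:ℝ) ^ (a * (((stableSets G).sup Finset.card - S.card : ℕ) : ℝ)) *
        ∏ w ∈ S, (q w + 0) ^ a =
      ∑ S ∈ maxStableSets G, ∏ w ∈ S, q w ^ a := by
    rw [maxStableSets, Finset.sum_filter]
    exact Finset.sum_congr rfl hterm
  rw [hnum, hden]

/-- for every `0 < C₋ ≤ C₊ < ∞` and every `v ∈ V`,
`sup_{q ∈ [C₋,C₊]^V} |π^{Nq}(σ_v = 1) - π̄^q(v)| → 0` as `N → ∞`. -/
theorem piActive_tendsto_piBar_uniform {V : Type*} [Fintype V] [DecidableEq V]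
    (G : SimpleGraph V) [DecidableRel G.Adj] (a : ℝ) (ha : 0 < a)
    (Cm Cp : ℝ) (hCm : 0 < Cm) (hCmCp : Cm ≤ Cp) (v : V) :
    ∀ ε > 0, ∃ N₀ : ℕ, ∀ N : ℕ, N₀ ≤ N → ∀ q : V → ℝ,
      (∀ w, q w ∈ Set.Icc Cm Cp) →
      |piActive G a (fun w => (N : ℝ) * q w) v - piBar G a q v| < ε := by
  intro ε hε
  set Υ := (stableSets G).sup Finset.card with hΥ
  set K : Set (ℝ × (V → ℝ)) :=
    Set.Icc (0:ℝ) 1 ×ˢ Set.univ.pi (fun _ : V => Set.Icc Cm Cp) with hK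
  have hKcompact : IsCompact K :=
    isCompact_Icc.prod (isCompact_univ_pi fun _ => isCompact_Icc)
  -- positivity/nonnegativity of terms on K
  have hbase : ∀ p ∈ K, ∀ w : V, 0 < p.2 w + p.1 := by
    rintro p ⟨hp1, hp2⟩ w
    have := (hp2 w (Set.mem_univ w)).1
    have := hp1.1
    nlinarith
  have htermnonneg : ∀ p ∈ K, ∀ S ∈ stableSets G,
      0 ≤ p.1 ^ (a * ((Υ - S.card : ℕ) : ℝ)) * ∏ w ∈ S, (p.2 w + p.1) ^ a := by
    intro p hp S _
    have h1 : (0:ℝ) ≤ p.1 := hp.1.1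
    have h2 : 0 ≤ ∏ w ∈ S, (p.2 w + p.1) ^ a :=
      Finset.prod_nonneg fun w _ => Real.rpow_nonneg (hbase p hp w).le a
    positivity
  -- denominator is positive on K
  obtain ⟨S₀, hS₀mem, hS₀card⟩ := Finset.exists_mem_eq_sup _ (stableSets_nonempty G) Finset.card
  have hdenpos : ∀ p ∈ K,
      0 < ∑ S ∈ stableSets G, p.1 ^ (a * ((Υ - S.card : ℕ) : ℝ)) * ∏ w ∈ S, (p.2 w + p.1) ^ a := by
    intro p hp
    refine Finset.sum_pos' (fun S hS => htermnonneg p hp S hS) ⟨S₀, hS₀mem, ?_⟩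
    have h0 : (Υ - S₀.card : ℕ) = 0 := by omega
    rw [h0]
    simp only [Nat.cast_zero, mul_zero, Real.rpow_zero, one_mul]
    exact Finset.prod_pos fun w _ => Real.rpow_pos_of_pos (hbase p hp w) a
  -- continuity of gAux on K
  have hcont : ContinuousOn (gAux G a v) K := by
    unfold gAux
    apply ContinuousOn.div
    · apply continuousOn_finset_sum
      intro S hS
      apply ContinuousOn.mul
      · exact (continuousOn_fst).rpow_const (fun p hp => Or.inr (by positivity))
      · apply continuousOn_finset_prod
        intro w _
        exact (Continuous.continuousOn (by fun_prop :
          Continuous (fun p : ℝ × (V → ℝ) => p.2 w + p.1))).rpow_const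
          (fun p hp => Or.inl (hbase p hp w).ne')
    · apply continuousOn_finset_sum
      intro S hS
      apply ContinuousOn.mul
      · exact (continuousOn_fst).rpow_const (fun p hp => Or.inr (by positivity))
      · apply continuousOn_finset_prod
        intro w _
        exact (Continuous.continuousOn (by fun_prop :
          Continuous (fun p : ℝ × (V → ℝ) => p.2 w + p.1))).rpow_const
          (fun p hp => Or.inl (hbase p hp w).ne')
    · exact fun p hp => (hdenpos p hp).ne'
  have huc := hKcompact.uniformContinuousOn_of_continuous hcont
  rw [Metric.uniformContinuousOn_iff] at huc
  obtain ⟨δ, hδ, hδε⟩ := huc ε hε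
  obtain ⟨M, hM⟩ := exists_nat_gt (1/δ)
  refine ⟨M + 1, fun N hN q hq => ?_⟩
  have hN1 : 1 ≤ N := le_trans (Nat.le_add_left 1 M) hN
  have hN0 : (0:ℝ) < (N:ℝ) := by positivity
  have hqpos : ∀ w, 0 ≤ q w := fun w => le_trans hCm.le (hq w).1
  rw [piActive_eq_gAux G a v hN1 q hqpos, ← gAux_zero_eq_piBar G ha v q]
  have hqmem : q ∈ Set.univ.pi (fun _ : V => Set.Icc Cm Cp) := fun w _ => hq w
  have hmem1 : ((N:ℝ)⁻¹, q) ∈ K := by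
    refine ⟨⟨by positivity, ?_⟩, hqmem⟩
    rw [inv_le_one_iff₀]
    right
    exact_mod_cast hN1
  have hmem0 : ((0:ℝ), q) ∈ K := ⟨⟨le_refl 0, zero_le_one⟩, hqmem⟩
  have hdist : dist ((N:ℝ)⁻¹, q) ((0:ℝ), q) < δ := by
    rw [Prod.dist_eq]
    simp only [dist_self]
    have h1 : dist ((N:ℝ)⁻¹) (0:ℝ) = (N:ℝ)⁻¹ := by
      rw [Real.dist_eq, sub_zero, abs_of_nonneg (by positivity)]
    rw [h1, sup_eq_left.mpr (by positivity)]
    have hMN : (M:ℝ) < (N:ℝ) := by exact_mod_cast Nat.lt_of_lt_of_le (Nat.lt_succ_self M) hN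
    rw [inv_lt_comm₀ hN0 hδ, ← one_div]
    exact lt_trans hM hMN
  have := hδε _ hmem1 _ hmem0 hdist
  rwa [Real.dist_eq] at this
end

section
/- Let $q^0 \in [0,\infty)^V$ and let $f$ be any solution of the complete-graph initial value problem with initial condition $q^0$. Then $\tau^0(f) = \inf\{t > 0 : s(f(t)) \le 0\}$; that is, the first time some coordinate of $f$ reaches $0$ coincides with the first time the sum of all coordinates reaches $0$ (all coordinates touch $0$ simultaneously, if at all). -/
open Finset

/-- The fluid drift of QB-CSMA on a complete interference graph:
`g_v(q) = λ_v - q_v^a / ∑_w q_w^a`. -/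
noncomputable def gdrift {V : Type*} [Fintype V] (a : ℝ) (lam : V → ℝ) (q : V → ℝ) :
    V → ℝ :=
  fun v => lam v - q v ^ a / ∑ w, q w ^ a

/-- A solution of the complete-graph initial value problem with initial condition `q⁰`:
a continuous `f : [0,∞) → [0,∞)^V` with `f(0) = q⁰`, whose sum of coordinates is
`max(s(q⁰) + (s(λ)-1) t, 0)`, and which satisfies `f'(t) = g(f(t))` at every `t > 0`
with `f(t) ≠ 0`. -/
def IsCGSolution {V : Type*} [Fintype V] (a : ℝ) (lam : V → ℝ) (q0 : V → ℝ)
    (f : ℝ → V → ℝ) : Prop :=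
  ContinuousOn f (Set.Ici 0) ∧ f 0 = q0 ∧
    (∀ t, 0 ≤ t → ∀ v, 0 ≤ f t v) ∧
    (∀ t, 0 ≤ t → ∑ v, f t v = max ((∑ v, q0 v) + ((∑ v, lam v) - 1) * t) 0) ∧
    (∀ t, 0 < t → f t ≠ 0 → HasDerivAt f (gdrift a lam (f t)) t)

/-- `τ⁰(f) = inf {t > 0 : min_v f_v(t) ≤ 0}`, with the convention `inf ∅ = +∞`
(realized by taking the infimum in the extended reals). -/
noncomputable def tau0 {V : Type*} (f : ℝ → V → ℝ) : EReal :=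
  sInf ((fun t : ℝ => (t : EReal)) '' {t : ℝ | 0 < t ∧ ∃ v, f t v ≤ 0})

/-- Key lemma: while the sum is positive, every coordinate is positive. -/
lemma pos_of_sum_pos {V : Type*} [Fintype V] [Nonempty V]
    (a : ℝ) (ha : 0 < a) (lam : V → ℝ) (hlam : ∀ v, 0 < lam v)
    (q0 : V → ℝ) (hq0 : ∀ v, 0 ≤ q0 v)
    (f : ℝ → V → ℝ) (hf : IsCGSolution a lam q0 f)
    (t : ℝ) (ht : 0 < t) (hS : 0 < ∑ v, f t v) (v : V) : 0 < f t v := by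
  obtain ⟨hcont, hf0, hpos, hsum, hode⟩ := hf
  by_contra hv
  push_neg at hv
  have hveq : f t v = 0 := le_antisymm hv (hpos t ht.le v)
  set s0 : ℝ := ∑ v, q0 v with hs0
  set c : ℝ := (∑ v, lam v) - 1 with hc
  have hs0nn : 0 ≤ s0 := Finset.sum_nonneg fun w _ => hq0 w
  have hlin : 0 < s0 + c * t := by
    have := hsum t ht.le
    rw [this] at hS
    rcases lt_max_iff.1 hS with h | h
    · exact h
    · exact absurd h (lt_irrefl 0)
  -- sum positive on (0, t]
  have hApos : ∀ s, 0 < s → s ≤ t → 0 < ∑ w, f s w := by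
    intro s hs hst
    rw [hsum s hs.le]
    refine lt_max_iff.2 (Or.inl ?_)
    rcases le_or_gt c 0 with hcle | hcpos
    · have : c * t ≤ c * s := mul_le_mul_of_nonpos_left hst hcle
      linarith
    · have : 0 < c * s := mul_pos hcpos hs
      linarith
  have hne : ∀ s, 0 < s → s ≤ t → f s ≠ 0 := by
    intro s hs hst h0
    have := hApos s hs hst
    rw [h0] at this
    simp at this
  -- the denominator at time t is positive
  have hDt : 0 < ∑ w, f t w ^ a := by
    have hw : ∃ w, 0 < f t w := by
      by_contra h
      push_neg at h
      exact absurd hS (not_lt.2 (Finset.sum_nonpos fun w _ => h w))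
    obtain ⟨w, hw⟩ := hw
    refine Finset.sum_pos' (fun u _ => Real.rpow_nonneg (hpos t ht.le u) a)
      ⟨w, Finset.mem_univ w, Real.rpow_pos_of_pos hw a⟩
  set D : ℝ → ℝ := fun s => ∑ w, f s w ^ a with hD
  -- continuity at t
  have hfct : ContinuousAt f t := (hode t ht (hne t ht le_rfl)).continuousAt
  have hfvct : ContinuousAt (fun s => f s v) t :=
    (continuous_apply v).continuousAt.comp hfct
  have hDct : ContinuousAt D t := by
    apply tendsto_finset_sum
    intro w _
    have hw1 : ContinuousAt (fun s => f s w) t :=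
      (continuous_apply w).continuousAt.comp hfct
    exact hw1.rpow_const (Or.inr ha.le)
  set δ : ℝ := (lam v * D t / 2) ^ a⁻¹ with hδdef
  have hhalf : 0 < lam v * D t / 2 := div_pos (mul_pos (hlam v) hDt) two_pos
  have hδpos : 0 < δ := Real.rpow_pos_of_pos hhalf _
  have hδa : δ ^ a = lam v * D t / 2 := Real.rpow_inv_rpow hhalf.le (ne_of_gt ha)
  -- eventual bounds near t
  have hev : ∀ᶠ s in nhds t, D t / 2 < D s ∧ f s v < δ := by
    refine (hDct.eventually (eventually_gt_nhds (by linarith))).and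
      (hfvct.eventually (eventually_lt_nhds ?_))
    show f t v < δ
    rw [hveq]; exact hδpos
  obtain ⟨ε, hε, hball⟩ := Metric.eventually_nhds_iff.1 hev
  set η : ℝ := min (ε / 2) (t / 2) with hη
  have hηpos : 0 < η := lt_min (by linarith) (by linarith)
  have hηlt : t - η > 0 := by
    have : η ≤ t / 2 := min_le_right _ _
    linarith
  have hIcc : ∀ s ∈ Set.Icc (t - η) t, D t / 2 < D s ∧ f s v < δ := by
    intro s hs
    apply hball
    rw [Real.dist_eq, abs_lt]
    have h1 : η ≤ ε / 2 := min_le_left _ _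
    constructor <;> [skip; skip] <;> cases' hs with h2 h3 <;> linarith
  -- strict monotonicity of f · v on [t-η, t]
  have hmono : StrictMonoOn (fun s => f s v) (Set.Icc (t - η) t) := by
    apply strictMonoOn_of_deriv_pos (convex_Icc _ _)
    · exact (continuous_apply v).comp_continuousOn
        (hcont.mono (fun s hs => le_trans hηlt.le hs.1))
    · intro s hs
      rw [interior_Icc] at hs
      have hs0 : 0 < s := lt_trans hηlt hs.1
      have hst : s ≤ t := hs.2.le
      have hd : HasDerivAt f (gdrift a lam (f s)) s := hode s hs0 (hne s hs0 hst)
      have hdv : HasDerivAt (fun u => f u v) (gdrift a lam (f s) v) s :=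
        hasDerivAt_pi.1 hd v
      rw [hdv.deriv]
      have hb := hIcc s ⟨hs.1.le, hst⟩
      have hDs : 0 < D s := lt_trans (by linarith) hb.1
      have h1 : f s v ^ a < δ ^ a :=
        Real.rpow_lt_rpow (hpos s hs0.le v) hb.2 ha
      have h2 : lam v * (D t / 2) < lam v * D s :=
        mul_lt_mul_of_pos_left hb.1 (hlam v)
      show 0 < lam v - f s v ^ a / (∑ w, f s w ^ a)
      rw [sub_pos, div_lt_iff₀ hDs]
      nlinarith [hδa, h1, h2]
  have : f (t - η) v < f t v :=
    hmono ⟨le_refl _, by linarith⟩ ⟨by linarith, le_refl _⟩ (by linarith)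
  rw [hveq] at this
  exact absurd this (not_lt.2 (hpos (t - η) hηlt.le v))

/-- for any solution `f` of the complete-graph initial value problem,
the first time some coordinate of `f` reaches `0` coincides with the first time
the sum of all coordinates reaches `0`. -/
theorem tau0_eq_tau0_sum {V : Type*} [Fintype V] [Nonempty V]
    (a : ℝ) (ha : 0 < a) (lam : V → ℝ) (hlam : ∀ v, 0 < lam v)
    (q0 : V → ℝ) (hq0 : ∀ v, 0 ≤ q0 v)
    (f : ℝ → V → ℝ) (hf : IsCGSolution a lam q0 f) :
    tau0 f = sInf ((fun t : ℝ => (t : EReal)) '' {t : ℝ | 0 < t ∧ ∑ v, f t v ≤ 0}) := by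
  have hset : {t : ℝ | 0 < t ∧ ∃ v, f t v ≤ 0} = {t : ℝ | 0 < t ∧ ∑ v, f t v ≤ 0} := by
    ext t
    simp only [Set.mem_setOf_eq]
    constructor
    · rintro ⟨ht, v, hv⟩
      refine ⟨ht, ?_⟩
      by_contra h'
      push_neg at h'
      exact absurd hv (not_le.2 (pos_of_sum_pos a ha lam hlam q0 hq0 f hf t ht h' v))
    · rintro ⟨ht, hS⟩
      refine ⟨ht, Classical.arbitrary V, ?_⟩
      calc f t (Classical.arbitrary V)
          ≤ ∑ v, f t v := Finset.single_le_sum (fun w _ => hf.2.2.1 t ht.le w)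
            (Finset.mem_univ _)
        _ ≤ 0 := hS
  rw [tau0, hset]
end

section
/- Assume $s(\lambda) > 1$. Then for every $q^0 \in [0,\infty)^V$, every solution $f$ of the complete-graph initial value problem with initial condition $q^0$ satisfies $f_v(t) \ge \min\big(\lambda_v/2,\ (\lambda_v/2)^{1/a}\,(s(\lambda)-1)/n\big)\, t$ for every $v \in V$ and every $t \ge 0$. In particular $\tau^0(f) = +\infty$. -/
open Finset

/-- if `s(λ) > 1` then every solution of the complete-graph initial
value problem satisfies `f_v(t) ≥ min(λ_v/2, (λ_v/2)^{1/a} (s(λ)-1)/n) t` for all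
`v` and `t ≥ 0`; in particular `τ⁰(f) = +∞`. -/
theorem tau0_eq_top_of_supercritical {V : Type*} [Fintype V] [Nonempty V]
    (a : ℝ) (ha : 0 < a) (lam : V → ℝ) (hlam : ∀ v, 0 < lam v)
    (hsup : 1 < ∑ v, lam v)
    (q0 : V → ℝ) (hq0 : ∀ v, 0 ≤ q0 v)
    (f : ℝ → V → ℝ) (hf : IsCGSolution a lam q0 f) :
    (∀ v, ∀ t, 0 ≤ t →
        min (lam v / 2)
          ((lam v / 2) ^ (1 / a) * ((∑ w, lam w) - 1) / (Fintype.card V : ℝ)) * t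
          ≤ f t v) ∧
      tau0 f = ⊤ := by
  obtain ⟨hcont, hf0, hnn, hsum, hderiv⟩ := hf
  have hnpos : (0:ℝ) < (Fintype.card V : ℝ) := by exact_mod_cast Fintype.card_pos
  have hs1 : (0:ℝ) < (∑ v, lam v) - 1 := by linarith
  have hq0s : (0:ℝ) ≤ ∑ v, q0 v := Finset.sum_nonneg fun v _ => hq0 v
  have hsumge : ∀ t : ℝ, 0 ≤ t → ((∑ v, lam v) - 1) * t ≤ ∑ v, f t v := by
    intro t ht
    rw [hsum t ht]
    exact le_max_of_le_left (by nlinarith)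
  have hsumpos : ∀ t : ℝ, 0 < t → (0:ℝ) < ∑ v, f t v := fun t ht =>
    lt_of_lt_of_le (by positivity) (hsumge t ht.le)
  have hne0 : ∀ t : ℝ, 0 < t → f t ≠ 0 := by
    intro t ht h0
    have := hsumpos t ht
    rw [h0] at this
    simp at this
  -- lower bound on the sum of rpow's
  have hpow : ∀ t : ℝ, 0 < t →
      (((∑ v, lam v) - 1) * t / (Fintype.card V : ℝ)) ^ a ≤ ∑ w, f t w ^ a := by
    intro t ht
    have hmean : ∑ _v : V, (∑ v, f t v) / (Fintype.card V : ℝ) = ∑ v, f t v := by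
      rw [Finset.sum_const, Finset.card_univ, nsmul_eq_mul]
      field_simp
    obtain ⟨w, -, hw⟩ := Finset.exists_le_of_sum_le (Finset.univ_nonempty) hmean.le
    have h1 : ((∑ v, lam v) - 1) * t / (Fintype.card V : ℝ) ≤ f t w := by
      refine le_trans ?_ hw
      exact (div_le_div_iff_of_pos_right hnpos).mpr (hsumge t ht.le)
    calc (((∑ v, lam v) - 1) * t / (Fintype.card V : ℝ)) ^ a ≤ f t w ^ a :=
          Real.rpow_le_rpow (by positivity) h1 ha.le
      _ ≤ ∑ w, f t w ^ a :=
          Finset.single_le_sum (fun i _ => Real.rpow_nonneg (hnn t ht.le i) a)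
            (Finset.mem_univ w)
  -- drift bound when the coordinate is small
  have hdrift : ∀ v, ∀ x : ℝ, 0 < x →
      f x v ≤ (lam v / 2) ^ (1 / a) * ((∑ w, lam w) - 1) * x / (Fintype.card V : ℝ) →
      f x v ^ a / ∑ w, f x w ^ a ≤ lam v / 2 := by
    intro v x hx hfle
    have hS : 0 < ∑ w, f x w ^ a := lt_of_lt_of_le (by positivity) (hpow x hx)
    have hX : (0:ℝ) ≤ ((∑ w, lam w) - 1) * x / (Fintype.card V : ℝ) := by positivity
    have hfa : f x v ^ a ≤
        (lam v / 2) * ((((∑ w, lam w) - 1) * x / (Fintype.card V : ℝ)) ^ a) := by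
      have h1 : f x v ^ a ≤
          ((lam v / 2) ^ (1 / a) * (((∑ w, lam w) - 1) * x / (Fintype.card V : ℝ))) ^ a := by
        apply Real.rpow_le_rpow (hnn x hx.le v) _ ha.le
        calc f x v ≤ (lam v / 2) ^ (1 / a) * ((∑ w, lam w) - 1) * x / (Fintype.card V : ℝ) :=
              hfle
          _ = (lam v / 2) ^ (1 / a) * (((∑ w, lam w) - 1) * x / (Fintype.card V : ℝ)) := by
              ring
      refine h1.trans (le_of_eq ?_)
      rw [Real.mul_rpow (Real.rpow_nonneg (by linarith [hlam v]) _) hX, one_div,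
        Real.rpow_inv_rpow (by linarith [hlam v]) ha.ne']
    rw [div_le_iff₀ hS]
    have h2 : (lam v / 2) * ((((∑ w, lam w) - 1) * x / (Fintype.card V : ℝ)) ^ a) ≤
        (lam v / 2) * ∑ w, f x w ^ a :=
      mul_le_mul_of_nonneg_left (hpow x hx) (by linarith [hlam v])
    linarith
  -- the key lower bound
  have key : ∀ v, ∀ t, 0 ≤ t →
      min (lam v / 2)
        ((lam v / 2) ^ (1 / a) * ((∑ w, lam w) - 1) / (Fintype.card V : ℝ)) * t ≤ f t v := by
    intro v
    set c := min (lam v / 2)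
        ((lam v / 2) ^ (1 / a) * ((∑ w, lam w) - 1) / (Fintype.card V : ℝ)) with hc
    have hc1 : c ≤ lam v / 2 := min_le_left _ _
    by_contra hcon
    push_neg at hcon
    obtain ⟨t0, ht0, hlt⟩ := hcon
    have ht0pos : 0 < t0 := by
      rcases ht0.lt_or_eq with h | h
      · exact h
      · exfalso
        rw [← h] at hlt
        have := hnn 0 le_rfl v
        simp at hlt
        linarith
    set h : ℝ → ℝ := fun t => f t v - c * t with hh
    set A : Set ℝ := Set.Icc 0 t0 ∩ h ⁻¹' Set.Ici 0 with hA
    have hconth : ContinuousOn h (Set.Icc 0 t0) := by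
      apply ContinuousOn.sub
      · exact ((continuous_apply v).comp_continuousOn
          (hcont.mono (Set.Icc_subset_Ici_self)))
      · exact (continuous_const.mul continuous_id).continuousOn
    have hclosed : IsClosed A :=
      hconth.preimage_isClosed_of_isClosed isClosed_Icc isClosed_Ici
    have h0A : (0:ℝ) ∈ A := by
      constructor
      · exact Set.mem_Icc.2 ⟨le_rfl, ht0pos.le⟩
      · simp only [Set.mem_preimage, Set.mem_Ici, hh]
        have := hnn 0 le_rfl v
        simp
        linarith
    have hbdd : BddAbove A := ⟨t0, fun x hx => hx.1.2⟩
    set t1 := sSup A with ht1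
    have ht1A : t1 ∈ A := hclosed.csSup_mem ⟨0, h0A⟩ hbdd
    have ht1nn : 0 ≤ t1 := ht1A.1.1
    have ht1le : t1 ≤ t0 := ht1A.1.2
    have ht1h : 0 ≤ h t1 := ht1A.2
    have ht1lt : t1 < t0 := by
      rcases ht1le.lt_or_eq with h' | h'
      · exact h'
      · exfalso
        rw [h'] at ht1h
        simp only [hh] at ht1h
        linarith
    have hneg : ∀ x, t1 < x → x ≤ t0 → h x < 0 := by
      intro x hx1 hx2
      by_contra hge
      push_neg at hge
      have hxA : x ∈ A := ⟨Set.mem_Icc.2 ⟨le_trans ht1nn hx1.le, hx2⟩, hge⟩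
      exact absurd (le_csSup hbdd hxA) (not_le.2 hx1)
    have hder : ∀ x ∈ Set.Ioo t1 t0,
        HasDerivAt h (gdrift a lam (f x) v - c) x := by
      intro x hx
      have hx0 : 0 < x := lt_of_le_of_lt ht1nn hx.1
      have h1 : HasDerivAt (fun s => f s v) (gdrift a lam (f x) v) x :=
        hasDerivAt_pi.1 (hderiv x hx0 (hne0 x hx0)) v
      have h2 : HasDerivAt (fun s : ℝ => c * s) c x := by
        simpa using (hasDerivAt_id x).const_mul c
      exact h1.sub h2
    have hmono : MonotoneOn h (Set.Icc t1 t0) := by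
      apply monotoneOn_of_deriv_nonneg (convex_Icc t1 t0)
      · exact hconth.mono (Set.Icc_subset_Icc_left ht1nn)
      · rw [interior_Icc]
        intro x hx
        exact (hder x hx).differentiableAt.differentiableWithinAt
      · rw [interior_Icc]
        intro x hx
        rw [(hder x hx).deriv]
        have hx0 : 0 < x := lt_of_le_of_lt ht1nn hx.1
        have hxneg := hneg x hx.1 hx.2.le
        simp only [hh] at hxneg
        have hfle : f x v ≤
            (lam v / 2) ^ (1 / a) * ((∑ w, lam w) - 1) * x / (Fintype.card V : ℝ) := by
          have hc2 : c ≤ (lam v / 2) ^ (1 / a) * ((∑ w, lam w) - 1) / (Fintype.card V : ℝ) :=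
            min_le_right _ _
          calc f x v ≤ c * x := by linarith
            _ ≤ ((lam v / 2) ^ (1 / a) * ((∑ w, lam w) - 1) / (Fintype.card V : ℝ)) * x :=
                mul_le_mul_of_nonneg_right hc2 hx0.le
            _ = (lam v / 2) ^ (1 / a) * ((∑ w, lam w) - 1) * x / (Fintype.card V : ℝ) := by
                ring
        have hratio := hdrift v x hx0 hfle
        simp only [gdrift]
        linarith
    have hfin : h t1 ≤ h t0 :=
      hmono (Set.mem_Icc.2 ⟨le_rfl, ht1le⟩) (Set.mem_Icc.2 ⟨ht1le, le_rfl⟩) ht1le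
    simp only [hh] at hfin ht1h
    linarith
  refine ⟨key, ?_⟩
  have hempty : {t : ℝ | 0 < t ∧ ∃ v, f t v ≤ 0} = ∅ := by
    ext t
    simp only [Set.mem_setOf_eq, Set.mem_empty_iff_false, iff_false, not_and, not_exists, not_le]
    rintro ht v
    have hcpos : 0 < min (lam v / 2)
        ((lam v / 2) ^ (1 / a) * ((∑ w, lam w) - 1) / (Fintype.card V : ℝ)) := by
      apply lt_min
      · linarith [hlam v]
      · exact div_pos (mul_pos (Real.rpow_pos_of_pos (by linarith [hlam v]) _) hs1) hnpos
    calc (0:ℝ) < min (lam v / 2)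
          ((lam v / 2) ^ (1 / a) * ((∑ w, lam w) - 1) / (Fintype.card V : ℝ)) * t :=
        mul_pos hcpos ht
      _ ≤ f t v := key v t ht.le
  rw [tau0, hempty, Set.image_empty, sInf_empty]
end

section
/- Assume $s(\lambda) < 1$. Then for every $q^0 \in [0,\infty)^V$, every solution $f$ of the complete-graph initial value problem with initial condition $q^0$ satisfies $\tau^0(f) = \inf\{t>0 : s(f(t)) \le 0\} = s(q^0)/(1 - s(\lambda))$. -/
open Finset Filter Topology

/-- if `s(λ) < 1` then every solution `f` of the complete-graph initial
value problem satisfies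
`τ⁰(f) = inf {t > 0 : s(f(t)) ≤ 0} = s(q⁰)/(1 - s(λ))`. -/
theorem tau0_eq_of_subcritical {V : Type*} [Fintype V] [Nonempty V]
    (a : ℝ) (ha : 0 < a) (lam : V → ℝ) (hlam : ∀ v, 0 < lam v)
    (hsub : (∑ v, lam v) < 1)
    (q0 : V → ℝ) (hq0 : ∀ v, 0 ≤ q0 v)
    (f : ℝ → V → ℝ) (hf : IsCGSolution a lam q0 f) :
    tau0 f = sInf ((fun t : ℝ => (t : EReal)) '' {t : ℝ | 0 < t ∧ ∑ v, f t v ≤ 0}) ∧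
      tau0 f = (((∑ v, q0 v) / (1 - ∑ v, lam v) : ℝ) : EReal) := by
  obtain ⟨hcont, hf0, hnonneg, hsum, hderiv⟩ := hf
  set L : ℝ := ∑ v, lam v with hLdef
  set S : ℝ := ∑ v, q0 v with hSdef
  have h1L : 0 < 1 - L := by linarith
  have hS0 : 0 ≤ S := Finset.sum_nonneg fun v _ => hq0 v
  set T : ℝ := S / (1 - L) with hTdef
  have hT0 : 0 ≤ T := div_nonneg hS0 h1L.le
  -- characterization of t < T
  have lt_T_iff : ∀ t : ℝ, t < T ↔ 0 < S + (L - 1) * t := by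
    intro t
    rw [hTdef, lt_div_iff₀ h1L]
    constructor <;> intro h <;> nlinarith
  -- positivity before T
  have hpos : ∀ t : ℝ, 0 < t → t < T → ∀ v, 0 < f t v := by
    intro t ht htT v
    by_contra hle
    push_neg at hle
    have hveq : f t v = 0 := le_antisymm hle (hnonneg t ht.le v)
    have hx : 0 < S + (L - 1) * t := (lt_T_iff t).mp htT
    have hsumpos : 0 < ∑ w, f t w := by
      rw [hsum t ht.le]; exact lt_max_iff.mpr (Or.inl hx)
    have hne : f t ≠ 0 := by
      intro h
      rw [h] at hsumpos
      simp at hsumpos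
    have hD := hderiv t ht hne
    have hDv : HasDerivAt (fun s => f s v) (gdrift a lam (f t) v) t :=
      hasDerivAt_pi.mp hD v
    have hgv : gdrift a lam (f t) v = lam v := by
      simp [gdrift, hveq, Real.zero_rpow (ne_of_gt ha)]
    rw [hgv] at hDv
    have htend := hasDerivAt_iff_tendsto_slope.mp hDv
    have h1 : ∀ᶠ s in 𝓝[≠] t, 0 < slope (fun s => f s v) t s :=
      htend.eventually (eventually_gt_nhds (hlam v))
    have h1' : ∀ᶠ s in 𝓝[<] t, 0 < slope (fun s => f s v) t s :=
      h1.filter_mono (nhdsWithin_mono t fun s hs => ne_of_lt hs)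
    have h2 : ∀ᶠ s in 𝓝[<] t, (0:ℝ) < s :=
      eventually_nhdsWithin_of_eventually_nhds (eventually_gt_nhds ht)
    obtain ⟨s, hslope, hs0, hst⟩ := (h1'.and (h2.and eventually_mem_nhdsWithin)).exists
    have hst' : s - t < 0 := sub_neg.mpr hst
    have : f s v < 0 := by
      have h0 : 0 < (s - t)⁻¹ * f s v := by simpa [slope, hveq] using hslope
      have hinv : (s - t)⁻¹ < 0 := inv_neg''.mpr hst'
      nlinarith
    exact absurd (hnonneg s hs0.le v) (not_le.mpr this)
  -- zero at and after T
  have hzero : ∀ t : ℝ, 0 < t → T ≤ t → ∀ v, f t v = 0 := by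
    intro t ht hTt
    have hx : S + (L - 1) * t ≤ 0 := by
      by_contra h
      push_neg at h
      exact absurd ((lt_T_iff t).mpr h) (not_lt.mpr hTt)
    have hsumz : ∑ w, f t w = 0 := by
      rw [hsum t ht.le]; exact max_eq_right hx
    intro v
    have := (Finset.sum_eq_zero_iff_of_nonneg
      (fun w _ => hnonneg t ht.le w)).mp hsumz
    exact this v (Finset.mem_univ v)
  -- the two hitting-time sets coincide with {t | 0 < t ∧ T ≤ t}
  have hsetA : {t : ℝ | 0 < t ∧ ∃ v, f t v ≤ 0} = {t : ℝ | 0 < t ∧ T ≤ t} := by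
    ext t
    simp only [Set.mem_setOf_eq]
    constructor
    · rintro ⟨ht, v, hv⟩
      refine ⟨ht, ?_⟩
      by_contra h
      push_neg at h
      exact absurd (hpos t ht h v) (not_lt.mpr hv)
    · rintro ⟨ht, hTt⟩
      exact ⟨ht, Classical.arbitrary V, le_of_eq (hzero t ht hTt _)⟩
  have hsetB : {t : ℝ | 0 < t ∧ ∑ v, f t v ≤ 0} = {t : ℝ | 0 < t ∧ T ≤ t} := by
    ext t
    simp only [Set.mem_setOf_eq]
    constructor
    · rintro ⟨ht, hs⟩
      refine ⟨ht, ?_⟩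
      by_contra h
      push_neg at h
      have hx : 0 < S + (L - 1) * t := (lt_T_iff t).mp h
      have : 0 < ∑ w, f t w := by
        rw [hsum t ht.le]; exact lt_max_iff.mpr (Or.inl hx)
      linarith
    · rintro ⟨ht, hTt⟩
      have : ∑ w, f t w = 0 := Finset.sum_eq_zero fun w _ => hzero t ht hTt w
      exact ⟨ht, le_of_eq this⟩
  -- compute the infimum
  have hinf : sInf ((fun t : ℝ => (t : EReal)) '' {t : ℝ | 0 < t ∧ T ≤ t})
      = ((T : ℝ) : EReal) := by
    apply le_antisymm
    · apply le_of_forall_gt_imp_ge_of_dense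
      intro c hc
      induction c with
      | bot => exact absurd hc (by simp)
      | top =>
        have hmem : (((T + 1 : ℝ) : EReal)) ∈
            (fun t : ℝ => (t : EReal)) '' {t : ℝ | 0 < t ∧ T ≤ t} :=
          ⟨T + 1, ⟨by linarith, by linarith⟩, rfl⟩
        exact le_trans (sInf_le hmem) le_top
      | coe r =>
        have hr : T < r := by exact_mod_cast hc
        exact sInf_le ⟨r, ⟨lt_of_le_of_lt hT0 hr, hr.le⟩, rfl⟩
    · apply le_sInf
      rintro x ⟨t, ⟨ht0, hTt⟩, rfl⟩
      show ((T:ℝ):EReal) ≤ ((t:ℝ):EReal)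
      exact_mod_cast hTt
  constructor
  · rw [tau0, hsetA, hsetB]
  · rw [tau0, hsetA, hinf]
end

section
/- Assume $s(\lambda) = 1$. Then for every solution $f$ of the complete-graph initial value problem: if $q^0 \neq 0$ then $\tau^0(f) = +\infty$, while if $q^0 = 0$ then $\tau^0(f) = 0$ (indeed $f \equiv 0$). -/
open Finset

/-- if `s(λ) = 1`, then for every solution `f` of the complete-graph
initial value problem: `τ⁰(f) = +∞` if `q⁰ ≠ 0`, while `τ⁰(f) = 0` (indeed `f ≡ 0`
on `[0,∞)`) if `q⁰ = 0`. -/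
theorem tau0_critical {V : Type*} [Fintype V] [Nonempty V]
    (a : ℝ) (ha : 0 < a) (lam : V → ℝ) (hlam : ∀ v, 0 < lam v)
    (hcrit : (∑ v, lam v) = 1)
    (q0 : V → ℝ) (hq0 : ∀ v, 0 ≤ q0 v)
    (f : ℝ → V → ℝ) (hf : IsCGSolution a lam q0 f) :
    (q0 ≠ 0 → tau0 f = ⊤) ∧
      (q0 = 0 → tau0 f = (0 : EReal) ∧ ∀ t, 0 ≤ t → f t = 0) := by

  obtain ⟨hcont, hf0, hnn, hsum, hode⟩ := hf
  have hkey : ∀ t : ℝ, 0 ≤ t → ∑ v, f t v = ∑ v, q0 v := by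
    intro t ht
    have h1 : (∑ v, q0 v) + ((∑ v, lam v) - 1) * t = ∑ v, q0 v := by
      rw [hcrit]; ring
    rw [hsum t ht, h1, max_eq_left (Finset.sum_nonneg fun v _ => hq0 v)]
  constructor
  · -- q0 ≠ 0
    intro hq0ne
    have hS : 0 < ∑ v, q0 v := by
      obtain ⟨v, hv⟩ : ∃ v, q0 v ≠ 0 := by
        by_contra h; push_neg at h; exact hq0ne (funext h)
      exact Finset.sum_pos' (fun i _ => hq0 i)
        ⟨v, Finset.mem_univ v, lt_of_le_of_ne (hq0 v) (Ne.symm hv)⟩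
    have hn : (0:ℝ) < (Fintype.card V : ℝ) := by
      exact_mod_cast Fintype.card_pos
    have hSn : 0 < (∑ v, q0 v) / (Fintype.card V : ℝ) := div_pos hS hn
    set c : ℝ := ((∑ v, q0 v) / (Fintype.card V : ℝ)) ^ a with hc_def
    have hc : 0 < c := Real.rpow_pos_of_pos hSn a
    have hsumpow : ∀ t : ℝ, 0 ≤ t → c ≤ ∑ w, f t w ^ a := by
      intro t ht
      obtain ⟨w, hw⟩ : ∃ w, (∑ v, q0 v) / (Fintype.card V : ℝ) ≤ f t w := by
        by_contra hcon
        push_neg at hcon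
        have hlt : ∑ v, f t v < ∑ _v : V, (∑ v, q0 v) / (Fintype.card V : ℝ) :=
          Finset.sum_lt_sum_of_nonempty Finset.univ_nonempty fun i _ => hcon i
        rw [hkey t ht, Finset.sum_const, Finset.card_univ, nsmul_eq_mul] at hlt
        have heq : (Fintype.card V : ℝ) * ((∑ v, q0 v) / (Fintype.card V : ℝ))
            = ∑ v, q0 v := by field_simp
        linarith
      calc c ≤ f t w ^ a := Real.rpow_le_rpow hSn.le hw ha.le
        _ ≤ ∑ w, f t w ^ a := Finset.single_le_sum
            (fun i _ => Real.rpow_nonneg (hnn t ht i) a) (Finset.mem_univ w)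
    have hne0 : ∀ t : ℝ, 0 ≤ t → f t ≠ 0 := by
      intro t ht h
      have := hkey t ht
      rw [h] at this
      simp only [Pi.zero_apply, Finset.sum_const_zero] at this
      linarith
    have hpos : ∀ t : ℝ, 0 < t → ∀ v, 0 < f t v := by
      intro t1 ht1 v
      by_contra hle
      push_neg at hle
      set ε : ℝ := (lam v * c / 2) ^ a⁻¹ with hε_def
      have hlc : 0 < lam v * c / 2 := div_pos (mul_pos (hlam v) hc) two_pos
      have hεpos : 0 < ε := Real.rpow_pos_of_pos hlc _
      have hεa : ε ^ a = lam v * c / 2 :=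
        Real.rpow_inv_rpow hlc.le ha.ne'
      have hcv : ContinuousAt (fun t => f t v) t1 := by
        have h1 : ContinuousOn (fun t => f t v) (Set.Ici 0) :=
          fun x hx => ((continuous_apply v).continuousAt).comp_continuousWithinAt (hcont x hx)
        exact h1.continuousAt (Ici_mem_nhds ht1)
      have hev : ∀ᶠ x in nhds t1, f x v < ε :=
        hcv (Iio_mem_nhds (lt_of_le_of_lt hle hεpos))
      obtain ⟨δ, hδ, hball⟩ := Metric.eventually_nhds_iff.mp hev
      set t0 : ℝ := max (t1 - δ/2) (t1/2) with ht0_def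
      have ht0 : 0 < t0 := lt_of_lt_of_le (by linarith) (le_max_right _ _)
      have ht01 : t0 < t1 := max_lt (by linarith) (by linarith)
      have hsub : ∀ x ∈ Set.Icc t0 t1, f x v < ε := by
        intro x hx
        apply hball
        rw [Real.dist_eq, abs_sub_lt_iff]
        constructor
        · linarith [hx.2]
        · have : t1 - δ/2 ≤ t0 := le_max_left _ _
          linarith [hx.1]
      have hmono : StrictMonoOn (fun t => f t v) (Set.Icc t0 t1) := by
        apply strictMonoOn_of_deriv_pos (convex_Icc _ _)
        · apply ContinuousOn.mono
            (fun x hx => ((continuous_apply v).continuousAt).comp_continuousWithinAt (hcont x hx))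
          intro x hx
          exact le_trans ht0.le hx.1
        · intro x hx
          rw [interior_Icc] at hx
          have hx0 : 0 < x := lt_trans ht0 hx.1
          have hd : HasDerivAt (fun t => f t v) (gdrift a lam (f x) v) x :=
            hasDerivAt_pi.mp (hode x hx0 (hne0 x hx0.le)) v
          rw [hd.deriv]
          have hfx : f x v < ε := hsub x ⟨hx.1.le, hx.2.le⟩
          have h1 : f x v ^ a ≤ lam v * c / 2 := by
            rw [← hεa]
            exact Real.rpow_le_rpow (hnn x hx0.le v) hfx.le ha.le
          have h2 : c ≤ ∑ w, f x w ^ a := hsumpow x hx0.le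
          have h3 : f x v ^ a / ∑ w, f x w ^ a ≤ lam v / 2 := by
            have h4 : f x v ^ a / ∑ w, f x w ^ a ≤ (lam v * c / 2) / c :=
              div_le_div₀ (div_pos (mul_pos (hlam v) hc) two_pos).le h1 hc h2
            have h5 : (lam v * c / 2) / c = lam v / 2 := by
              field_simp
            linarith
          have := hlam v
          simp only [gdrift]
          linarith
      have hlt : f t0 v < f t1 v :=
        hmono (Set.left_mem_Icc.mpr ht01.le) (Set.right_mem_Icc.mpr ht01.le) ht01
      have := hnn t0 ht0.le v
      linarith
    have hset : {t : ℝ | 0 < t ∧ ∃ v, f t v ≤ 0} = ∅ := by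
      ext t
      simp only [Set.mem_setOf_eq, Set.mem_empty_iff_false, iff_false, not_and]
      rintro ht ⟨v, hv⟩
      exact absurd hv (not_le.mpr (hpos t ht v))
    unfold tau0
    rw [hset]
    simp
  · -- q0 = 0
    intro h0
    have hzero : ∀ t, 0 ≤ t → f t = 0 := by
      intro t ht
      funext v
      have hs : ∑ v, f t v = 0 := by rw [hkey t ht, h0]; simp
      have := (Finset.sum_eq_zero_iff_of_nonneg (fun v _ => hnn t ht v)).mp hs v
        (Finset.mem_univ v)
      simpa using this
    refine ⟨?_, hzero⟩
    unfold tau0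
    apply le_antisymm
    · by_contra hlt
      push_neg at hlt
      obtain ⟨r, hr0, hrs⟩ := EReal.lt_iff_exists_real_btwn.mp hlt
      have hrpos : (0:ℝ) < r := by exact_mod_cast hr0
      have hmem : (r : EReal) ∈ (fun t : ℝ => (t : EReal)) '' {t : ℝ | 0 < t ∧ ∃ v, f t v ≤ 0} := by
        refine Set.mem_image_of_mem _ ⟨hrpos, Classical.arbitrary V, ?_⟩
        rw [hzero r hrpos.le]
        exact le_refl 0
      exact absurd (sInf_le hmem) (not_le.mpr hrs)
    · apply le_sInf
      rintro x ⟨t, ⟨ht, -⟩, rfl⟩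
      show (0:EReal) ≤ (t:EReal)
      exact_mod_cast ht.le
end

section
/- For every $q^0 \in [0,\infty)^V$, the complete-graph initial value problem has at most one solution: if $\bar q$ and $\tilde q$ are two solutions with the same initial condition $q^0$, then $\bar q(t) = \tilde q(t)$ for all $t \ge 0$. -/
open Finset

/-!
Both solutions carry the prescribed total mass, so where it vanishes they both vanish. Elsewhere a
solution `f₁` is compared with a time shift `f₂ (· + h)` of the other through the squared excess
`D t = ∑ v, max (f₁ t v - f₂ (t + h) v) 0 ^ 2`. Where `f₁ t v > f₂ (t + h) v` the drift difference
is bounded by the increase of `∑ w, q w ^ a`, so `D' ≤ k D` with `k` the Lipschitz constant of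
`x ↦ x ^ a` divided by a lower bound for `∑ w, q w ^ a`. Near the boundary of the orthant `x ^ a` is
not Lipschitz, but every solution stays above `ρ t`, because a coordinate that is small compared
with the mass is pushed up at rate almost `λ_v`; hence `k t = O(t ^ (a - 1))`, which is integrable,
and Grönwall gives `D = 0`. If `q⁰ ≠ 0` take `h = 0`. If `q⁰ = 0`, the mass of `f₂` vanishes at
time `0` and so does the lower bound for `∑ w, q w ^ a`; then take `h > 0`, for which
`q⁰ = 0 ≤ f₂ h`, and let `h → 0`.
-/

open Set Filter Topology Real

lemma hasDerivAt_max_zero_sq (x : ℝ) :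
    HasDerivAt (fun y : ℝ => max y 0 ^ 2) (2 * max x 0) x := by
  refine hasDerivAt_of_hasDerivAt_of_ne' (x := 0) (g := fun y => 2 * max y 0) (fun y hy => ?_)
    (by fun_prop) (by fun_prop) x
  rcases hy.lt_or_gt with hy | hy
  · have hloc : (fun y : ℝ => max y 0 ^ 2) =ᶠ[𝓝 y] fun _ => 0 := by
      filter_upwards [Iio_mem_nhds hy] with z hz
      simp [max_eq_right (le_of_lt (mem_Iio.1 hz))]
    simpa [max_eq_right hy.le] using (hasDerivAt_const y (0 : ℝ)).congr_of_eventuallyEq hloc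
  · have hloc : (fun y : ℝ => max y 0 ^ 2) =ᶠ[𝓝 y] fun z => z ^ 2 := by
      filter_upwards [Ioi_mem_nhds hy] with z hz
      rw [max_eq_left (le_of_lt (mem_Ioi.1 hz))]
    simpa [max_eq_left hy.le] using (hasDerivAt_pow 2 y).congr_of_eventuallyEq hloc

/-- Grönwall's inequality for a rate `k` known only through a continuous primitive `Φ`, so that `k`
may be unbounded near the endpoints. -/
lemma le_mul_exp_of_hasDerivAt_le_mul {φ φ' Φ k : ℝ → ℝ} {a b : ℝ}
    (hφ : ContinuousOn φ (Icc a b)) (hΦ : ContinuousOn Φ (Icc a b))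
    (hφ' : ∀ t ∈ Ioo a b, HasDerivAt φ (φ' t) t) (hΦ' : ∀ t ∈ Ioo a b, HasDerivAt Φ (k t) t)
    (hle : ∀ t ∈ Ioo a b, φ' t ≤ k t * φ t) {t : ℝ} (ht : t ∈ Icc a b) :
    φ t ≤ φ a * exp (Φ t - Φ a) := by
  have hanti : AntitoneOn (fun s => φ s * exp (-Φ s)) (Icc a b) := by
    refine antitoneOn_of_hasDerivWithinAt_nonpos (convex_Icc a b)
      (hφ.mul (hΦ.neg.rexp)) (fun s hs => ?_) (fun s hs => ?_)
      (f' := fun s => φ' s * exp (-Φ s) + φ s * (exp (-Φ s) * -k s))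
    · rw [interior_Icc] at hs
      exact ((hφ' s hs).mul (hΦ' s hs).neg.exp).hasDerivWithinAt
    · rw [interior_Icc] at hs
      nlinarith [hle s hs, exp_pos (-Φ s)]
  calc φ t = φ t * exp (-Φ t) * exp (Φ t) := by rw [mul_assoc, ← exp_add]; simp
    _ ≤ φ a * exp (-Φ a) * exp (Φ t) :=
      mul_le_mul_of_nonneg_right (hanti (left_mem_Icc.2 (ht.1.trans ht.2)) ht ht.1) (exp_pos _).le
    _ = φ a * exp (Φ t - Φ a) := by rw [mul_assoc, ← exp_add, neg_add_eq_sub]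

lemma nonpos_of_hasDerivAt_le_rpow_mul {φ φ' : ℝ → ℝ} {a A B T t : ℝ} (ha : 0 < a)
    (hφ : ContinuousOn φ (Icc 0 T)) (hφ' : ∀ t ∈ Ioo 0 T, HasDerivAt φ (φ' t) t)
    (hle : ∀ t ∈ Ioo 0 T, φ' t ≤ (A * t ^ (a - 1) + B) * φ t) (h0 : φ 0 = 0)
    (ht : t ∈ Icc 0 T) : φ t ≤ 0 := by
  have hΦ' : ∀ t ∈ Ioo 0 T,
      HasDerivAt (fun t => A * t ^ a / a + B * t) (A * t ^ (a - 1) + B) t := by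
    intro t ht
    refine (((hasDerivAt_rpow_const (Or.inl ht.1.ne')).const_mul A).div_const a).add
      ((hasDerivAt_id t).const_mul B) |>.congr_deriv ?_
    rw [mul_div_assoc, mul_div_cancel_left₀ _ ha.ne', mul_one]
  have hΦ : Continuous fun t => A * t ^ a / a + B * t := by fun_prop (disch := exact ha.le)
  simpa [h0] using le_mul_exp_of_hasDerivAt_le_mul hφ hΦ.continuousOn hφ' hΦ' hle ht

lemma nonneg_of_hasDerivAt_nonneg_of_neg {y y' : ℝ → ℝ} {a b : ℝ}
    (hy : ContinuousOn y (Icc a b)) (hy' : ∀ t ∈ Ioo a b, HasDerivAt y (y' t) t)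
    (hya : 0 ≤ y a) (hpos : ∀ t ∈ Ioo a b, y t < 0 → 0 ≤ y' t) {t : ℝ} (ht : t ∈ Icc a b) :
    0 ≤ y t := by
  by_contra! hyt
  set S := Icc a t ∩ y ⁻¹' Ici 0
  have hS : IsClosed S :=
    (hy.mono (Icc_subset_Icc_right ht.2)).preimage_isClosed_of_isClosed isClosed_Icc isClosed_Ici
  have haS : a ∈ S := ⟨left_mem_Icc.2 ht.1, hya⟩
  have hbdd : BddAbove S := ⟨t, fun s hs => hs.1.2⟩
  obtain ⟨⟨hσa, hσt⟩, hyσ⟩ : sSup S ∈ S := hS.csSup_mem ⟨a, haS⟩ hbdd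
  have hneg : ∀ s ∈ Ioo (sSup S) t, y s < 0 := fun s hs => by
    by_contra! h
    exact hs.1.not_ge (le_csSup hbdd ⟨⟨hσa.trans hs.1.le, hs.2.le⟩, h⟩)
  have hsub : Ioo (sSup S) t ⊆ Ioo a b := Ioo_subset_Ioo hσa ht.2
  have hmono : MonotoneOn y (Icc (sSup S) t) := by
    refine monotoneOn_of_hasDerivWithinAt_nonneg (convex_Icc _ _)
      (hy.mono (Icc_subset_Icc hσa ht.2)) (fun s hs => ?_) (fun s hs => ?_) (f' := y')
    · rw [interior_Icc] at hs
      exact (hy' s (hsub hs)).hasDerivWithinAt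
    · rw [interior_Icc] at hs
      exact hpos s (hsub hs) (hneg s hs)
  exact hyt.not_ge (hyσ.trans (hmono (left_mem_Icc.2 hσt) (right_mem_Icc.2 hσt) hσt))

lemma exists_pos_add_rpow_lt {a ε : ℝ} (ha : 0 < a) (c : ℝ) (hε : 0 < ε) :
    ∃ ρ > 0, ρ + (c * ρ) ^ a < ε := by
  have hcont : ContinuousAt (fun ρ : ℝ => ρ + (c * ρ) ^ a) 0 :=
    (continuous_id.add ((continuous_const.mul continuous_id).rpow_const
      fun _ => Or.inr ha.le)).continuousAt
  have hlt : ∀ᶠ ρ in 𝓝 0, ρ + (c * ρ) ^ a < ε :=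
    hcont.eventually (gt_mem_nhds (by simpa [zero_rpow ha.ne'] using hε))
  exact ((hlt.filter_mono nhdsWithin_le_nhds).and (self_mem_nhdsWithin (s := Ioi 0))).exists.imp
    fun ρ h => ⟨h.2, h.1⟩

lemma abs_rpow_sub_rpow_le {a m M x y : ℝ} (ha : 0 < a) (hm : 0 < m)
    (hx : x ∈ Icc m M) (hy : y ∈ Icc m M) :
    |y ^ a - x ^ a| ≤ a * (m ^ (a - 1) + M ^ (a - 1)) * |y - x| := by
  have hderiv_le : ∀ z ∈ Icc m M, ‖a * z ^ (a - 1)‖ ≤ a * (m ^ (a - 1) + M ^ (a - 1)) := by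
    intro z ⟨hmz, hzM⟩
    have hz : 0 < z := hm.trans_le hmz
    rw [Real.norm_eq_abs, abs_of_pos (by positivity)]
    have hm' := rpow_nonneg hm.le (a - 1)
    have hM' := rpow_nonneg (hz.trans_le hzM).le (a - 1)
    rcases le_total a 1 with h1 | h1
    · nlinarith [rpow_le_rpow_of_nonpos hm hmz (by linarith : a - 1 ≤ 0)]
    · nlinarith [rpow_le_rpow hz.le hzM (by linarith : 0 ≤ a - 1)]
  simpa [Real.norm_eq_abs] using (convex_Icc m M).norm_image_sub_le_of_norm_hasDerivWithin_le
    (fun z hz => (hasDerivAt_rpow_const (Or.inl (hm.trans_le hz.1).ne')).hasDerivWithinAt)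
    hderiv_le hx hy

lemma rpow_sub_rpow_le_mul_max_sub_zero {a m M x y : ℝ} (ha : 0 < a) (hm : 0 < m)
    (hx : x ∈ Icc 0 M) (hy : y ∈ Icc m M) :
    x ^ a - y ^ a ≤ a * (m ^ (a - 1) + M ^ (a - 1)) * max (x - y) 0 := by
  have hM : 0 < M := hm.trans_le (hy.1.trans hy.2)
  have hK : 0 ≤ a * (m ^ (a - 1) + M ^ (a - 1)) := by positivity
  rcases le_total x y with hxy | hxy
  · nlinarith [rpow_le_rpow hx.1 hxy ha.le, le_max_right (x - y) 0]
  · rw [max_eq_left (sub_nonneg.2 hxy)]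
    simpa [abs_of_nonneg (sub_nonneg.2 hxy)] using
      (le_abs_self _).trans (abs_rpow_sub_rpow_le ha hm hy ⟨hy.1.trans hxy, hx.2⟩)

section

variable {V : Type*} [Fintype V]

lemma hasDerivAt_sum_max_zero_sq {F : ℝ → V → ℝ} {F' : V → ℝ} {t : ℝ}
    (hF : HasDerivAt F F' t) :
    HasDerivAt (fun s => ∑ v, max (F s v) 0 ^ 2) (∑ v, 2 * max (F t v) 0 * F' v) t :=
  .fun_sum fun v _ =>
    (hasDerivAt_max_zero_sq (F t v)).comp t (hasDerivAt_pi.1 hF v) (h₂ := fun y => max y 0 ^ 2)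

lemma le_of_sum_max_sub_zero_sq_nonpos {x y : V → ℝ}
    (h : ∑ v, max (x v - y v) 0 ^ 2 ≤ 0) (v : V) : x v ≤ y v := by
  have hv : max (x v - y v) 0 ^ 2 ≤ 0 :=
    (Finset.single_le_sum (fun w _ => sq_nonneg (max (x w - y w) 0)) (Finset.mem_univ v)).trans h
  have hmax : max (x v - y v) 0 = 0 :=
    pow_eq_zero_iff two_ne_zero |>.1 (le_antisymm hv (sq_nonneg _))
  linarith [le_max_left (x v - y v) 0]

lemma sum_div_card_rpow_le_sum_rpow [Nonempty V] {a : ℝ} (ha : 0 ≤ a) {q : V → ℝ}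
    (hq : ∀ v, 0 ≤ q v) : ((∑ v, q v) / Fintype.card V) ^ a ≤ ∑ v, q v ^ a := by
  obtain ⟨w, -, hw⟩ : ∃ w ∈ Finset.univ, (∑ v, q v) / Fintype.card V ≤ q w :=
    Finset.exists_le_of_sum_le Finset.univ_nonempty <| by
      simp [mul_div_cancel₀ _ (Nat.cast_ne_zero.2 Fintype.card_ne_zero : (Fintype.card V : ℝ) ≠ 0)]
  calc ((∑ v, q v) / Fintype.card V) ^ a ≤ q w ^ a :=
        rpow_le_rpow (div_nonneg (Finset.sum_nonneg fun v _ => hq v) (Nat.cast_nonneg _)) hw ha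
    _ ≤ ∑ v, q v ^ a := Finset.single_le_sum (fun v _ => rpow_nonneg (hq v) a) (Finset.mem_univ w)

lemma rpow_div_sum_rpow_le [Nonempty V] {a : ℝ} (ha : 0 ≤ a) {q : V → ℝ}
    (hq : ∀ v, 0 ≤ q v) (hsum : 0 < ∑ v, q v) (v : V) :
    q v ^ a / ∑ w, q w ^ a ≤ (Fintype.card V * q v / ∑ w, q w) ^ a := by
  have hbase : 0 < (∑ w, q w) / Fintype.card V := by positivity
  calc q v ^ a / ∑ w, q w ^ a ≤ q v ^ a / ((∑ w, q w) / Fintype.card V) ^ a :=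
        div_le_div_of_nonneg_left (rpow_nonneg (hq v) a) (rpow_pos_of_pos hbase a)
          (sum_div_card_rpow_le_sum_rpow ha hq)
    _ = (Fintype.card V * q v / ∑ w, q w) ^ a := by
        rw [← div_rpow (hq v) hbase.le]
        congr 1
        field_simp

lemma gdrift_sub_gdrift_le {a : ℝ} (ha : 0 ≤ a) (lam : V → ℝ) {u w : V → ℝ}
    (hu : ∀ x, 0 ≤ u x) (hSw : 0 < ∑ x, w x ^ a) {v : V} (hwv : 0 ≤ w v) (hwu : w v ≤ u v) :
    gdrift a lam u v - gdrift a lam w v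
      ≤ max (∑ x, u x ^ a - ∑ x, w x ^ a) 0 / ∑ x, w x ^ a := by
  set Su := ∑ x, u x ^ a
  set Sw := ∑ x, w x ^ a
  set θ := u v ^ a / Su
  have hSu : 0 ≤ Su := Finset.sum_nonneg fun x _ => rpow_nonneg (hu x) a
  have huSu : u v ^ a ≤ Su :=
    Finset.single_le_sum (fun x _ => rpow_nonneg (hu x) a) (Finset.mem_univ v)
  have huθ : u v ^ a = θ * Su := by
    rcases hSu.eq_or_lt with h | h
    · rw [← h] at huSu ⊢
      simpa using le_antisymm huSu (rpow_nonneg (hu v) a)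
    · rw [div_mul_cancel₀ _ h.ne']
  calc gdrift a lam u v - gdrift a lam w v = w v ^ a / Sw - θ := by simp only [gdrift]; ring
    _ ≤ u v ^ a / Sw - θ := by gcongr
    _ = θ * ((Su - Sw) / Sw) := by rw [huθ]; field_simp
    _ ≤ θ * (max (Su - Sw) 0 / Sw) :=
        mul_le_mul_of_nonneg_left (by gcongr; exact le_max_left _ _)
          (div_nonneg (rpow_nonneg (hu v) a) hSu)
    _ ≤ max (Su - Sw) 0 / Sw :=
        mul_le_of_le_one_left (by positivity) (div_le_one_of_le₀ huSu hSu)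

lemma sum_max_sub_zero_mul_gdrift_sub_le [Nonempty V] {a m M c : ℝ} (ha : 0 < a) (hm : 0 < m)
    (hc : 0 < c) (lam : V → ℝ) {u w : V → ℝ} (hu : ∀ v, u v ∈ Icc 0 M) (hw : ∀ v, w v ∈ Icc m M)
    (hcw : c ≤ ∑ v, w v ^ a) :
    ∑ v, 2 * max (u v - w v) 0 * (gdrift a lam u v - gdrift a lam w v)
      ≤ 2 * Fintype.card V * (a * (m ^ (a - 1) + M ^ (a - 1))) / c
          * ∑ v, max (u v - w v) 0 ^ 2 := by
  set K := a * (m ^ (a - 1) + M ^ (a - 1))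
  set p := fun v => max (u v - w v) 0
  have hp : ∀ v, 0 ≤ p v := fun v => le_max_right _ _
  have hM : 0 < M := hm.trans_le ((hw (Classical.arbitrary V)).1.trans (hw _).2)
  have hK : 0 ≤ K := by positivity
  have hSw : 0 < ∑ v, w v ^ a := hc.trans_le hcw
  have hgap : max (∑ x, u x ^ a - ∑ x, w x ^ a) 0 ≤ K * ∑ x, p x := by
    refine max_le ?_ (mul_nonneg hK (Finset.sum_nonneg fun x _ => hp x))
    rw [← Finset.sum_sub_distrib, Finset.mul_sum]
    exact Finset.sum_le_sum fun x _ => rpow_sub_rpow_le_mul_max_sub_zero ha hm (hu x) (hw x)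
  have hterm : ∀ v, 2 * p v * (gdrift a lam u v - gdrift a lam w v)
      ≤ 2 * p v * ((K * ∑ x, p x) / c) := by
    intro v
    rcases le_total (u v) (w v) with h | h
    · simp [p, max_eq_right (sub_nonpos.2 h)]
    gcongr
    calc gdrift a lam u v - gdrift a lam w v
        ≤ max (∑ x, u x ^ a - ∑ x, w x ^ a) 0 / ∑ x, w x ^ a :=
          gdrift_sub_gdrift_le ha.le lam (fun x => (hu x).1) hSw (hm.le.trans (hw v).1) h
      _ ≤ (K * ∑ x, p x) / c := div_le_div₀ (hgap.trans' (le_max_right _ _)) hgap hc hcw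
  calc _ ≤ ∑ v, 2 * p v * ((K * ∑ x, p x) / c) := Finset.sum_le_sum fun v _ => hterm v
    _ = 2 * K / c * (∑ v, p v) ^ 2 := by rw [← Finset.sum_mul, ← Finset.mul_sum]; ring
    _ ≤ 2 * K / c * (Fintype.card V * ∑ v, p v ^ 2) := by
        gcongr
        simpa using sq_sum_le_card_mul_sum_sq (s := Finset.univ) (f := p)
    _ = _ := by ring

def cgMass (q0 lam : V → ℝ) (t : ℝ) : ℝ := (∑ v, q0 v) + ((∑ v, lam v) - 1) * t

section cgMass

variable {q0 lam : V → ℝ}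

lemma cgMass_div_mul_le (hq0 : ∀ v, 0 ≤ q0 v) {T s : ℝ} (hT : 0 < T) (hs : s ∈ Icc 0 T) :
    cgMass q0 lam T / T * s ≤ cgMass q0 lam s := by
  have hs0 : 0 ≤ ∑ v, q0 v := Finset.sum_nonneg fun v _ => hq0 v
  rw [div_mul_eq_mul_div, div_le_iff₀ hT, cgMass, cgMass]
  nlinarith [hs.1, hs.2]

lemma cgMass_pos (hq0 : ∀ v, 0 ≤ q0 v) {T s : ℝ} (hT : 0 < cgMass q0 lam T) (hs : s ∈ Ioc 0 T) :
    0 < cgMass q0 lam s :=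
  (cgMass_div_mul_le hq0 (hs.1.trans_le hs.2) (Ioc_subset_Icc_self hs)).trans_lt'
    (mul_pos (div_pos hT (hs.1.trans_le hs.2)) hs.1)

lemma min_cgMass_le {x y s : ℝ} (hs : s ∈ Icc x y) :
    min (cgMass q0 lam x) (cgMass q0 lam y) ≤ cgMass q0 lam s := by
  rcases le_total ((∑ v, lam v) - 1) 0 with hβ | hβ
  · exact (min_le_right _ _).trans (by unfold cgMass; nlinarith [hs.2])
  · exact (min_le_left _ _).trans (by unfold cgMass; nlinarith [hs.1])

lemma cgMass_le_max {x y s : ℝ} (hs : s ∈ Icc x y) :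
    cgMass q0 lam s ≤ max (cgMass q0 lam x) (cgMass q0 lam y) := by
  rcases le_total ((∑ v, lam v) - 1) 0 with hβ | hβ
  · exact (le_max_left _ _).trans' (by unfold cgMass; nlinarith [hs.1])
  · exact (le_max_right _ _).trans' (by unfold cgMass; nlinarith [hs.2])

end cgMass

namespace IsCGSolution

variable {a : ℝ} {lam q0 : V → ℝ} {f f₁ f₂ : ℝ → V → ℝ}

lemma sum_eq (hf : IsCGSolution a lam q0 f) {t : ℝ} (ht : 0 ≤ t) (hL : 0 ≤ cgMass q0 lam t) :
    ∑ v, f t v = cgMass q0 lam t := by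
  rw [hf.2.2.2.1 t ht]
  exact max_eq_left hL

lemma apply_le_cgMass (hf : IsCGSolution a lam q0 f) {t : ℝ} (ht : 0 ≤ t)
    (hL : 0 ≤ cgMass q0 lam t) (v : V) : f t v ≤ cgMass q0 lam t :=
  hf.sum_eq ht hL ▸ Finset.single_le_sum (fun w _ => hf.2.2.1 t ht w) (Finset.mem_univ v)

lemma eq_zero_of_cgMass_nonpos (hf : IsCGSolution a lam q0 f) {t : ℝ} (ht : 0 ≤ t)
    (hL : cgMass q0 lam t ≤ 0) : f t = 0 := by
  have hsum : ∑ v, f t v = 0 := by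
    rw [hf.2.2.2.1 t ht]
    exact max_eq_right hL
  funext v
  exact (Finset.sum_eq_zero_iff_of_nonneg fun w _ => hf.2.2.1 t ht w).1 hsum v (Finset.mem_univ v)

lemma hasDerivAt (hf : IsCGSolution a lam q0 f) {t : ℝ} (ht : 0 < t) (hL : 0 < cgMass q0 lam t) :
    HasDerivAt f (gdrift a lam (f t)) t := by
  refine hf.2.2.2.2 t ht fun h0 => hL.ne' ?_
  simpa [h0] using (hf.sum_eq ht.le hL.le).symm

theorem exists_pos_mul_le [Nonempty V] (hf : IsCGSolution a lam q0 f) (ha : 0 < a)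
    (hlam : ∀ v, 0 < lam v) (hq0 : ∀ v, 0 ≤ q0 v) {T : ℝ} (hT : 0 < T)
    (hLT : 0 < cgMass q0 lam T) : ∃ ρ > 0, ∀ t ∈ Icc 0 T, ∀ v, ρ * t ≤ f t v := by
  obtain ⟨v₀, hv₀⟩ := Finite.exists_min lam
  set κ := cgMass q0 lam T / T
  have hκ : 0 < κ := div_pos hLT hT
  set n : ℝ := (Fintype.card V : ℝ)
  obtain ⟨ρ, hρ, hρlam⟩ := exists_pos_add_rpow_lt ha (n / κ) (hlam v₀)
  refine ⟨ρ, hρ, fun t ht v => sub_nonneg.1 ?_⟩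
  refine nonneg_of_hasDerivAt_nonneg_of_neg (y := fun s => f s v - ρ * s)
    (y' := fun s => gdrift a lam (f s) v - ρ) ?_ (fun s hs => ?_)
    (by simpa using hf.2.2.1 0 le_rfl v) (fun s hs hneg => ?_) ht
  · exact ((continuous_apply v).comp_continuousOn (hf.1.mono Icc_subset_Ici_self)).sub
      (by fun_prop)
  · have hL := cgMass_pos hq0 hLT ⟨hs.1, hs.2.le⟩
    exact (hasDerivAt_pi.1 (hf.hasDerivAt hs.1 hL) v).sub ((hasDerivAt_id s).const_mul ρ)
      |>.congr_deriv (by simp)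
  · have hL := cgMass_pos hq0 hLT ⟨hs.1, hs.2.le⟩
    have hmass : κ * s ≤ cgMass q0 lam s := cgMass_div_mul_le hq0 hT ⟨hs.1.le, hs.2.le⟩
    have hfv : f s v ≤ ρ * s := by linarith
    have hratio : n * f s v / cgMass q0 lam s ≤ n / κ * ρ :=
      calc n * f s v / cgMass q0 lam s ≤ n * (ρ * s) / (κ * s) :=
            div_le_div₀ (mul_nonneg (Nat.cast_nonneg _) (mul_pos hρ hs.1).le) (by gcongr)
              (mul_pos hκ hs.1) hmass
        _ = n / κ * ρ := by field_simp [hs.1.ne']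
    have hsum := hf.sum_eq hs.1.le hL.le
    have hrepulsion : f s v ^ a / ∑ w, f s w ^ a ≤ (n / κ * ρ) ^ a := by
      refine (rpow_div_sum_rpow_le ha.le (hf.2.2.1 s hs.1.le) (hsum ▸ hL) v).trans ?_
      rw [hsum]
      exact rpow_le_rpow
        (div_nonneg (mul_nonneg (Nat.cast_nonneg _) (hf.2.2.1 s hs.1.le v)) hL.le) hratio ha.le
    simp only [gdrift]
    linarith [hv₀ v]

lemma rpow_div_card_le_sum_rpow [Nonempty V] (hf : IsCGSolution a lam q0 f) (ha : 0 ≤ a)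
    {σ t : ℝ} (hσ : 0 ≤ σ) (ht : 0 ≤ t) (hσt : σ ≤ cgMass q0 lam t) :
    (σ / Fintype.card V) ^ a ≤ ∑ v, f t v ^ a := by
  refine (sum_div_card_rpow_le_sum_rpow ha (hf.2.2.1 t ht)).trans' ?_
  rw [hf.sum_eq ht (hσ.trans hσt)]
  gcongr

theorem apply_le_apply_add [Nonempty V] (hf₁ : IsCGSolution a lam q0 f₁)
    (hf₂ : IsCGSolution a lam q0 f₂) (ha : 0 < a) (hlam : ∀ v, 0 < lam v)
    (hq0 : ∀ v, 0 ≤ q0 v) {h T : ℝ} (hh : 0 ≤ h) (hT : 0 < T) (hLh : 0 < cgMass q0 lam h)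
    (hLT : 0 < cgMass q0 lam (T + h)) (hinit : ∀ v, q0 v ≤ f₂ h v) (v : V) :
    f₁ T v ≤ f₂ (T + h) v := by
  set n : ℝ := (Fintype.card V : ℝ)
  set σ := min (cgMass q0 lam h) (cgMass q0 lam (T + h))
  set M := max (cgMass q0 lam 0) (cgMass q0 lam (T + h))
  have hσ : 0 < σ := lt_min hLh hLT
  have hTh : 0 < T + h := by linarith
  obtain ⟨ρ, hρ, hρle⟩ := hf₂.exists_pos_mul_le ha hlam hq0 hTh hLT
  have hmass : ∀ s ∈ Icc 0 (T + h), 0 ≤ cgMass q0 lam s := fun s hs =>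
    (min_cgMass_le hs).trans' <|
      le_min (by simpa [cgMass] using Finset.sum_nonneg fun v _ => hq0 v) hLT.le
  have hbound : ∀ {g : ℝ → V → ℝ}, IsCGSolution a lam q0 g → ∀ s ∈ Icc 0 (T + h), ∀ v,
      g s v ∈ Icc 0 M := fun hg s hs v =>
    ⟨hg.2.2.1 s hs.1 v, (hg.apply_le_cgMass hs.1 (hmass s hs) v).trans (cgMass_le_max hs)⟩
  set c := 2 * n * a / (σ / n) ^ a with hc
  set F : ℝ → V → ℝ := fun t => f₁ t - f₂ (t + h)
  have hF : ContinuousOn F (Icc 0 T) := (hf₁.1.mono Icc_subset_Ici_self).sub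
    (hf₂.1.comp (by fun_prop) fun t ht => show 0 ≤ t + h by linarith [ht.1])
  have hF' : ∀ t ∈ Ioo 0 T,
      HasDerivAt F (gdrift a lam (f₁ t) - gdrift a lam (f₂ (t + h))) t := fun t ht =>
    (hf₁.hasDerivAt ht.1 (cgMass_pos hq0 hLT ⟨ht.1, by linarith [ht.2]⟩)).sub
      ((hf₂.hasDerivAt (by linarith [ht.1]) (hσ.trans_le
        (min_cgMass_le ⟨by linarith [ht.1], by linarith [ht.2]⟩))).comp_add_const t h)
  have hle : ∀ t ∈ Ioo 0 T,
      ∑ v, 2 * max (F t v) 0 * (gdrift a lam (f₁ t) v - gdrift a lam (f₂ (t + h)) v)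
        ≤ (c * ρ ^ (a - 1) * t ^ (a - 1) + c * M ^ (a - 1)) * ∑ v, max (F t v) 0 ^ 2 := by
    intro t ⟨ht0, htT⟩
    have hth : t + h ∈ Icc 0 (T + h) := ⟨by linarith, by linarith⟩
    refine (sum_max_sub_zero_mul_gdrift_sub_le ha (mul_pos hρ ht0) (by positivity) lam
      (fun v => hbound hf₁ t ⟨ht0.le, by linarith⟩ v)
      (fun v => ⟨(hρle (t + h) hth v).trans' (by nlinarith), (hbound hf₂ (t + h) hth v).2⟩)
      (hf₂.rpow_div_card_le_sum_rpow ha.le hσ.le hth.1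
        (min_cgMass_le ⟨by linarith, by linarith⟩))).trans_eq ?_
    simp only [mul_rpow hρ.le ht0.le, hc, n, F, Pi.sub_apply]
    ring
  have hD0 : ∑ v, max (F 0 v) 0 ^ 2 = 0 := Finset.sum_eq_zero fun v _ => by
    simp [F, hf₁.2.1, max_eq_right (sub_nonpos.2 (hinit v))]
  exact le_of_sum_max_sub_zero_sq_nonpos (nonpos_of_hasDerivAt_le_rpow_mul ha (by fun_prop)
    (fun t ht => hasDerivAt_sum_max_zero_sq (hF' t ht)) hle hD0 ⟨hT.le, le_rfl⟩) v

theorem apply_le_apply [Nonempty V] (hf₁ : IsCGSolution a lam q0 f₁)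
    (hf₂ : IsCGSolution a lam q0 f₂) (ha : 0 < a) (hlam : ∀ v, 0 < lam v)
    (hq0 : ∀ v, 0 ≤ q0 v) {t : ℝ} (ht : 0 < t) (hL : 0 < cgMass q0 lam t) (v : V) :
    f₁ t v ≤ f₂ t v := by
  rcases (Finset.sum_nonneg fun w _ => hq0 w).eq_or_lt with hs₀ | hs₀
  · have hq0_eq : ∀ w, q0 w = 0 := fun w =>
      (Finset.sum_eq_zero_iff_of_nonneg fun w _ => hq0 w).1 hs₀.symm w (Finset.mem_univ w)
    have hmass : ∀ s, 0 < s → 0 < cgMass q0 lam s := fun s hs => by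
      unfold cgMass at hL ⊢
      rw [← hs₀, zero_add] at hL ⊢
      exact mul_pos (pos_of_mul_pos_left hL ht.le) hs
    refine ContinuousWithinAt.closure_le (s := Ioi t) (f := fun _ => f₁ t v) (g := fun s => f₂ s v)
      (by rw [closure_Ioi]; exact self_mem_Ici) continuousWithinAt_const
      (((continuous_apply v).comp_continuousOn hf₂.1 t ht.le).mono fun s hs => (ht.trans hs).le)
      fun s hs => ?_
    have hh : 0 < s - t := sub_pos.2 hs
    simpa using hf₁.apply_le_apply_add hf₂ ha hlam hq0 hh.le ht (hmass _ hh)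
      (by rw [add_sub_cancel]; exact hmass s (ht.trans hs))
      (fun w => hq0_eq w ▸ hf₂.2.2.1 _ hh.le w) v
  · simpa using hf₁.apply_le_apply_add hf₂ ha hlam hq0 le_rfl ht (by simpa [cgMass] using hs₀)
      (by simpa using hL) (fun w => by rw [hf₂.2.1]) v

end IsCGSolution

end

/-- the complete-graph initial value problem has at most one solution:
two solutions with the same initial condition agree at every time `t ≥ 0`. -/
theorem cgSolution_unique {V : Type*} [Fintype V] [Nonempty V]
    (a : ℝ) (ha : 0 < a) (lam : V → ℝ) (hlam : ∀ v, 0 < lam v)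
    (q0 : V → ℝ) (hq0 : ∀ v, 0 ≤ q0 v)
    (f₁ f₂ : ℝ → V → ℝ)
    (hf₁ : IsCGSolution a lam q0 f₁) (hf₂ : IsCGSolution a lam q0 f₂) :
    ∀ t, 0 ≤ t → f₁ t = f₂ t := by
  intro t ht
  rcases ht.eq_or_lt with rfl | ht
  · rw [hf₁.2.1, hf₂.2.1]
  rcases le_or_gt (cgMass q0 lam t) 0 with hL | hL
  · rw [hf₁.eq_zero_of_cgMass_nonpos ht.le hL, hf₂.eq_zero_of_cgMass_nonpos ht.le hL]
  exact funext fun v => (hf₁.apply_le_apply hf₂ ha hlam hq0 ht hL v).antisymm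
    (hf₂.apply_le_apply hf₁ ha hlam hq0 ht hL v)
end

section
/- Let $q^N \in [0,\infty)^V$ be a sequence with $q^N \to q^0 \in [0,\infty)^V$, and for each $N$ let $f^N$ be the solution of the complete-graph initial value problem with initial condition $q^N$, and let $f$ be the solution with initial condition $q^0$. Then $f^N \to f$ uniformly on every compact subset of $[0,\infty)$. -/
/-!
Solutions are contractive in `ℓ¹`. While two solutions `f, g` are both nonzero, the right
derivative of `∑ v, |g t v - f t v|` is `≤ 0`: the normalized weights `q_v^a / ∑ q^a` are
ordered like the `q_v` and sum to one, so each term is at most `min / m - max / M` with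
`m ≤ M` the two normalizing sums. Once one solution has vanished, the mass of the other is
read off the explicit formula for its coordinate sum. Hence
`sup_t ‖f^N t - f t‖ ≤ ∑ v, |q^N v - q⁰ v| → 0`.
-/

open Finset

open Filter Set Topology

/-- The right derivative of `t ↦ |u t|` at a point where `u` takes the value `u` and has
derivative `d`. -/
noncomputable def rightDerivAbs (u d : ℝ) : ℝ :=
  if u = 0 then |d| else SignType.sign u * d

theorem HasDerivAt.tendsto_slope_abs_nhdsGT {u : ℝ → ℝ} {d z : ℝ} (hu : HasDerivAt u d z) :
    Tendsto (slope (fun w => |u w|) z) (𝓝[>] z) (𝓝 (rightDerivAbs (u z) d)) := by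
  unfold rightDerivAbs
  split_ifs with h
  · refine (hu.tendsto_slope.mono_left (nhdsGT_le_nhdsNE z)).abs.congr'
      (eventually_nhdsWithin_of_forall fun w (hw : z < w) => ?_)
    rw [slope_def_field, slope_def_field, h, abs_zero, sub_zero, sub_zero, abs_div,
      abs_of_pos (sub_pos.2 hw)]
  · exact ((hasDerivAt_abs h).comp z hu).tendsto_slope.mono_left (nhdsGT_le_nhdsNE z)

theorem rightDerivAbs_sub_div_le {u x y X Y m M : ℝ} (hx : 0 ≤ x) (hy : 0 ≤ y) (hm : 0 < m)
    (hmX : m ≤ X) (hmY : m ≤ Y) (hXM : X ≤ M) (hYM : Y ≤ M)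
    (hpos : 0 < u → x ≤ y) (hzero : u = 0 → x = y) (hneg : u < 0 → y ≤ x) :
    rightDerivAbs u (x / X - y / Y) ≤ min x y / m - max x y / M := by
  have hxX : x / X ≤ x / m := div_le_div_of_nonneg_left hx hm hmX
  have hyY : y / Y ≤ y / m := div_le_div_of_nonneg_left hy hm hmY
  have hxM : x / M ≤ x / X := div_le_div_of_nonneg_left hx (hm.trans_le hmX) hXM
  have hyM : y / M ≤ y / Y := div_le_div_of_nonneg_left hy (hm.trans_le hmY) hYM
  obtain hu | rfl | hu := lt_trichotomy u 0
  · have hyx := hneg hu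
    rw [rightDerivAbs, if_neg hu.ne, sign_neg hu, SignType.coe_neg_one, min_eq_right hyx,
      max_eq_left hyx]
    linarith
  · obtain rfl := hzero rfl
    rw [rightDerivAbs, if_pos rfl, min_self, max_self, abs_sub_le_iff]
    constructor <;> linarith
  · have hxy := hpos hu
    rw [rightDerivAbs, if_neg hu.ne', sign_pos hu, SignType.coe_one, min_eq_left hxy,
      max_eq_right hxy]
    linarith

theorem sum_rightDerivAbs_sub_div_sum_nonpos {V : Type*} [Fintype V] {u x y : V → ℝ}
    (hx : ∀ v, 0 ≤ x v) (hy : ∀ v, 0 ≤ y v) (hX : 0 < ∑ v, x v) (hY : 0 < ∑ v, y v)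
    (hpos : ∀ v, 0 < u v → x v ≤ y v) (hzero : ∀ v, u v = 0 → x v = y v)
    (hneg : ∀ v, u v < 0 → y v ≤ x v) :
    ∑ v, rightDerivAbs (u v) (x v / ∑ w, x w - y v / ∑ w, y w) ≤ 0 := by
  set m := min (∑ v, x v) (∑ v, y v)
  set M := max (∑ v, x v) (∑ v, y v)
  have hm : 0 < m := lt_min hX hY
  have hM : 0 < M := hX.trans_le (le_max_left _ _)
  have hmin : ∑ v, min (x v) (y v) ≤ m :=
    le_min (Finset.sum_le_sum fun v _ => min_le_left _ _)
      (Finset.sum_le_sum fun v _ => min_le_right _ _)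
  have hmax : M ≤ ∑ v, max (x v) (y v) :=
    max_le (Finset.sum_le_sum fun v _ => le_max_left _ _)
      (Finset.sum_le_sum fun v _ => le_max_right _ _)
  calc ∑ v, rightDerivAbs (u v) (x v / ∑ w, x w - y v / ∑ w, y w)
      ≤ ∑ v, (min (x v) (y v) / m - max (x v) (y v) / M) :=
        Finset.sum_le_sum fun v _ => rightDerivAbs_sub_div_le (hx v) (hy v) hm (min_le_left _ _)
          (min_le_right _ _) (le_max_left _ _) (le_max_right _ _) (hpos v) (hzero v) (hneg v)
    _ = (∑ v, min (x v) (y v)) / m - (∑ v, max (x v) (y v)) / M := by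
        rw [Finset.sum_sub_distrib, Finset.sum_div, Finset.sum_div]
    _ ≤ 1 - 1 := sub_le_sub ((div_le_one hm).2 hmin) ((one_le_div hM).2 hmax)
    _ = 0 := sub_self 1

theorem sum_rpow_pos {V : Type*} [Fintype V] {p : V → ℝ} (hp : ∀ v, 0 ≤ p v) (hp0 : p ≠ 0)
    (a : ℝ) : 0 < ∑ v, p v ^ a := by
  obtain ⟨w, hw⟩ := Function.ne_iff.1 hp0
  exact Finset.sum_pos' (fun v _ => Real.rpow_nonneg (hp v) a)
    ⟨w, Finset.mem_univ w, Real.rpow_pos_of_pos ((hp w).lt_of_ne' hw) a⟩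

theorem sum_rightDerivAbs_gdrift_sub_nonpos {V : Type*} [Fintype V] {a : ℝ} (ha : 0 < a)
    (lam : V → ℝ) {p q : V → ℝ} (hp : ∀ v, 0 ≤ p v) (hq : ∀ v, 0 ≤ q v) (hp0 : p ≠ 0)
    (hq0 : q ≠ 0) :
    ∑ v, rightDerivAbs (q v - p v) (gdrift a lam q v - gdrift a lam p v) ≤ 0 := by
  have hdrift : ∀ v, gdrift a lam q v - gdrift a lam p v
      = p v ^ a / ∑ w, p w ^ a - q v ^ a / ∑ w, q w ^ a := fun v => by
    simp only [gdrift]; ring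
  simp only [hdrift]
  exact sum_rightDerivAbs_sub_div_sum_nonpos (fun v => Real.rpow_nonneg (hp v) a)
    (fun v => Real.rpow_nonneg (hq v) a) (sum_rpow_pos hp hp0 a) (sum_rpow_pos hq hq0 a)
    (fun v h => Real.rpow_le_rpow (hp v) (sub_pos.1 h).le ha.le)
    (fun v h => by rw [sub_eq_zero.1 h])
    (fun v h => Real.rpow_le_rpow (hq v) (sub_neg.1 h).le ha.le)

theorem image_le_of_liminf_slope_right_nonpos {W : ℝ → ℝ} {a b : ℝ} (hab : a ≤ b)
    (hW : ContinuousOn W (Icc a b))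
    (bound : ∀ x ∈ Ioo a b, ∀ r, 0 < r → ∃ᶠ z in 𝓝[>] x, slope W x z < r) : W b ≤ W a := by
  obtain rfl | hab := hab.eq_or_lt
  · exact le_rfl
  have hle : ∀ c ∈ Ioo a b, W b ≤ W c := fun c hc =>
    image_le_of_liminf_slope_right_le_deriv_boundary (B := fun _ => W c) (B' := fun _ => 0)
      (hW.mono (Icc_subset_Icc_left hc.1.le)) le_rfl continuousOn_const
      (fun _ _ => hasDerivWithinAt_const _ _ _)
      (fun x hx => bound x ⟨hc.1.trans_le hx.1, hx.2⟩) (right_mem_Icc.2 hc.2.le)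
  have hWa : Tendsto W (𝓝[>] a) (𝓝 (W a)) :=
    ((hW a (left_mem_Icc.2 hab.le)).mono_of_mem_nhdsWithin
      (Icc_mem_nhdsGE hab)).tendsto.mono_left (nhdsWithin_mono a Ioi_subset_Ici_self)
  exact ge_of_tendsto hWa (Filter.mem_of_superset (Ioo_mem_nhdsGT hab) hle)

namespace IsCGSolution

variable {V : Type*} [Fintype V] {a : ℝ} {lam p0 q0 : V → ℝ} {f g : ℝ → V → ℝ}

theorem eq_zero_iff (hf : IsCGSolution a lam p0 f) {t : ℝ} (ht : 0 ≤ t) :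
    f t = 0 ↔ (∑ v, p0 v) + ((∑ v, lam v) - 1) * t ≤ 0 := by
  obtain ⟨-, -, hnonneg, hsum, -⟩ := hf
  rw [← Fintype.sum_eq_zero_iff_of_nonneg (hnonneg t ht), hsum t ht, max_eq_right_iff]

theorem ne_zero_of_le (hf : IsCGSolution a lam p0 f) {z t : ℝ} (hz : 0 < z) (hzt : z ≤ t)
    (ht : f t ≠ 0) : f z ≠ 0 := by
  rw [Ne, hf.eq_zero_iff (hz.le.trans hzt), not_le] at ht
  rw [Ne, hf.eq_zero_iff hz.le, not_le]
  obtain ⟨-, hinit, hnonneg, -, -⟩ := hf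
  have hp0 : 0 ≤ ∑ v, p0 v := hinit ▸ Finset.sum_nonneg fun v _ => hnonneg 0 le_rfl v
  rcases le_or_gt ((∑ v, lam v) - 1) 0 with hc | hc
  · nlinarith
  · positivity

theorem sum_abs_sub_le_of_eq_zero (hf : IsCGSolution a lam p0 f) (hg : IsCGSolution a lam q0 g)
    {t : ℝ} (ht : 0 ≤ t) (hft : f t = 0) : ∑ v, |g t v - f t v| ≤ ∑ v, |q0 v - p0 v| := by
  have hs := (hf.eq_zero_iff ht).1 hft
  have hq0p0 : ∑ v, q0 v - ∑ v, p0 v ≤ ∑ v, |q0 v - p0 v| := by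
    rw [← Finset.sum_sub_distrib]
    exact (le_abs_self _).trans (Finset.abs_sum_le_sum_abs _ _)
  obtain ⟨-, -, hnonneg, hsum, -⟩ := hg
  simp only [hft, Pi.zero_apply, sub_zero, abs_of_nonneg (hnonneg t ht _)]
  rw [hsum t ht]
  exact max_le (by linarith) (Finset.sum_nonneg fun v _ => abs_nonneg _)

theorem tendsto_slope_sum_abs_sub (hf : IsCGSolution a lam p0 f)
    (hg : IsCGSolution a lam q0 g) {z : ℝ} (hz : 0 < z) (hfz : f z ≠ 0) (hgz : g z ≠ 0) :
    Tendsto (slope (fun t => ∑ v, |g t v - f t v|) z) (𝓝[>] z)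
      (𝓝 (∑ v, rightDerivAbs (g z v - f z v)
        (gdrift a lam (g z) v - gdrift a lam (f z) v))) := by
  have hslope : slope (fun t => ∑ v, |g t v - f t v|) z
      = fun w => ∑ v, slope (fun t => |g t v - f t v|) z w := by
    ext w
    simp only [slope_def_field, ← Finset.sum_sub_distrib, Finset.sum_div]
  rw [hslope]
  obtain ⟨-, -, -, -, hf'⟩ := hf
  obtain ⟨-, -, -, -, hg'⟩ := hg
  exact tendsto_finsetSum _ fun v _ => ((hasDerivAt_pi.1 (hg' z hz hgz) v).sub
    (hasDerivAt_pi.1 (hf' z hz hfz) v)).tendsto_slope_abs_nhdsGT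

theorem sum_abs_sub_le (ha : 0 < a) (hf : IsCGSolution a lam p0 f)
    (hg : IsCGSolution a lam q0 g) {t : ℝ} (ht : 0 ≤ t) :
    ∑ v, |g t v - f t v| ≤ ∑ v, |q0 v - p0 v| := by
  by_cases hft : f t = 0
  · exact hf.sum_abs_sub_le_of_eq_zero hg ht hft
  by_cases hgt : g t = 0
  · simpa only [abs_sub_comm] using hg.sum_abs_sub_le_of_eq_zero hf ht hgt
  have ⟨hfc, hf0, hfnn, _, _⟩ := hf
  have ⟨hgc, hg0, hgnn, _, _⟩ := hg
  have hW : ContinuousOn (fun t => ∑ v, |g t v - f t v|) (Icc 0 t) :=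
    continuousOn_finsetSum _ fun v _ => (((continuous_apply v).comp_continuousOn hgc).sub
      ((continuous_apply v).comp_continuousOn hfc)).abs.mono Icc_subset_Ici_self
  have hW0t := image_le_of_liminf_slope_right_nonpos ht hW fun z hz r hr => by
    have hfz := hf.ne_zero_of_le hz.1 hz.2.le hft
    have hgz := hg.ne_zero_of_le hz.1 hz.2.le hgt
    have hdiss := sum_rightDerivAbs_gdrift_sub_nonpos ha lam (hfnn z hz.1.le)
      (hgnn z hz.1.le) hfz hgz
    exact ((hf.tendsto_slope_sum_abs_sub hg hz.1 hfz hgz).eventually_lt_const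
      (hdiss.trans_lt hr)).frequently
  simpa only [hf0, hg0] using hW0t

end IsCGSolution

theorem cgSolution_tendsto_of_tendsto_general {V : Type*} [Fintype V]
    (a : ℝ) (ha : 0 < a) (lam : V → ℝ)
    (qN : ℕ → V → ℝ)
    (q0 : V → ℝ)
    (hconv : Filter.Tendsto qN Filter.atTop (nhds q0))
    (fN : ℕ → ℝ → V → ℝ) (hfN : ∀ N, IsCGSolution a lam (qN N) (fN N))
    (f : ℝ → V → ℝ) (hf : IsCGSolution a lam q0 f) :
    ∀ K : Set ℝ, IsCompact K → K ⊆ Set.Ici 0 →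
      TendstoUniformlyOn (fun N t => fN N t) f Filter.atTop K := by
  intro K _ hK
  have hl1 : Tendsto (fun N => ∑ v, |qN N v - q0 v|) atTop (𝓝 0) := by
    have hcont : Continuous fun q : V → ℝ => ∑ v, |q v - q0 v| := by fun_prop
    exact (hcont.tendsto' q0 0 (by simp)).comp hconv
  rw [Metric.tendstoUniformlyOn_iff]
  intro ε hε
  filter_upwards [hl1.eventually_lt_const hε] with N hN t htK
  refine lt_of_le_of_lt ((dist_pi_le_iff (by positivity)).2 fun v => ?_) hN
  calc dist (f t v) (fN N t v) = |fN N t v - f t v| := by rw [Real.dist_eq, abs_sub_comm]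
    _ ≤ ∑ w, |fN N t w - f t w| :=
        Finset.single_le_sum (fun w _ => abs_nonneg (fN N t w - f t w)) (Finset.mem_univ v)
    _ ≤ ∑ w, |qN N w - q0 w| := hf.sum_abs_sub_le ha (hfN N) (hK htK)

/-- continuity in the initial condition. If `q^N → q⁰` in `[0,∞)^V`,
`f^N` solves the complete-graph initial value problem started from `q^N` and `f`
the one started from `q⁰`, then `f^N → f` uniformly on every compact subset of
`[0,∞)`. -/
theorem cgSolution_tendsto_of_tendsto {V : Type*} [Fintype V] [Nonempty V]
    (a : ℝ) (ha : 0 < a) (lam : V → ℝ) (hlam : ∀ v, 0 < lam v)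
    (qN : ℕ → V → ℝ) (hqN : ∀ N v, 0 ≤ qN N v)
    (q0 : V → ℝ) (hq0 : ∀ v, 0 ≤ q0 v)
    (hconv : Filter.Tendsto qN Filter.atTop (nhds q0))
    (fN : ℕ → ℝ → V → ℝ) (hfN : ∀ N, IsCGSolution a lam (qN N) (fN N))
    (f : ℝ → V → ℝ) (hf : IsCGSolution a lam q0 f) :
    ∀ K : Set ℝ, IsCompact K → K ⊆ Set.Ici 0 →
      TendstoUniformlyOn (fun N t => fN N t) f Filter.atTop K :=
  cgSolution_tendsto_of_tendsto_general a ha lam qN q0 hconv fN hfN f hf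
end

section
/- Assume $s(\lambda) \le 1$ and $q^0 \in [0,\infty)^V$ with $q^0 \neq 0$. Let $f$ be any solution of the complete-graph initial value problem with initial condition $q^0$. Then there exists $t^0 > 0$ such that $f_v(t) > 0$ for every $v \in V$ and every $t \in (0, t^0]$: even coordinates that start at $0$ become strictly positive instantaneously. More precisely, there exist $t^0 > 0$ and $\epsilon' > 0$ such that for every $v\in V$ with $q^0_v \le \epsilon'$, whenever $0 < t \le t^0$ and $f_v(t) \le (\lambda_v/2)^{1/a}\, s(q^0)/(2n)$ one has $f_v'(t) > \lambda_v/2$. -/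
open Finset

/-- assume `s(λ) ≤ 1` and `q⁰ ≠ 0`. Along any solution of the
complete-graph initial value problem, all coordinates become strictly positive
instantaneously; more precisely there are `t⁰ > 0` and `ε' > 0` such that every
coordinate starting below `ε'` has derivative larger than `λ_v/2` whenever
`0 < t ≤ t⁰` and `f_v(t) ≤ (λ_v/2)^{1/a} s(q⁰)/(2n)`. -/
theorem cgSolution_positive_small_times {V : Type*} [Fintype V] [Nonempty V]
    (a : ℝ) (ha : 0 < a) (lam : V → ℝ) (hlam : ∀ v, 0 < lam v)
    (hsub : (∑ v, lam v) ≤ 1)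
    (q0 : V → ℝ) (hq0 : ∀ v, 0 ≤ q0 v) (hq0ne : q0 ≠ 0)
    (f : ℝ → V → ℝ) (hf : IsCGSolution a lam q0 f) :
    (∃ t0 > (0 : ℝ), ∀ v, ∀ t, 0 < t → t ≤ t0 → 0 < f t v) ∧
      (∃ t0 > (0 : ℝ), ∃ ε' > (0 : ℝ), ∀ v, q0 v ≤ ε' → ∀ t, 0 < t → t ≤ t0 →
        f t v ≤ (lam v / 2) ^ (1 / a) * (∑ w, q0 w) / (2 * (Fintype.card V : ℝ)) →
        lam v / 2 < deriv (fun s => f s v) t) := by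
  obtain ⟨hcont, hf0, hpos, hsums, hderiv⟩ := hf
  set S : ℝ := ∑ v, q0 v with hS_def
  have hS : 0 < S := by
    obtain ⟨v, hv⟩ : ∃ v, q0 v ≠ 0 := by
      by_contra h; push_neg at h; exact hq0ne (funext h)
    exact Finset.sum_pos' (fun w _ => hq0 w)
      ⟨v, Finset.mem_univ v, lt_of_le_of_ne (hq0 v) (Ne.symm hv)⟩
  set n : ℝ := (Fintype.card V : ℝ) with hn_def
  have hn : 0 < n := by
    rw [hn_def]; exact_mod_cast Fintype.card_pos (α := V)
  have hlam_sum_nonneg : (0:ℝ) ≤ ∑ v, lam v :=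
    Finset.sum_nonneg fun v _ => (hlam v).le
  -- lower bound on the sum of coordinates
  have hsum2 : ∀ t, 0 < t → t ≤ S / 2 → S / 2 ≤ ∑ w, f t w := by
    intro t ht ht'
    rw [hsums t ht.le]
    have h1 : S / 2 ≤ S + ((∑ v, lam v) - 1) * t := by nlinarith
    exact le_trans h1 (le_max_left _ _)
  have hfne : ∀ t, 0 < t → t ≤ S / 2 → f t ≠ 0 := by
    intro t ht ht' h0
    have := hsum2 t ht ht'
    rw [h0] at this
    simp at this
    linarith
  -- coordinatewise derivative
  have hDa : ∀ t, 0 < t → t ≤ S / 2 → ∀ v,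
      HasDerivAt (fun s => f s v) (gdrift a lam (f t) v) t := by
    intro t ht ht' v
    exact hasDerivAt_pi.1 (hderiv t ht (hfne t ht ht')) v
  -- key drift estimate
  have key : ∀ v, ∀ t, 0 < t → t ≤ S / 2 →
      f t v ≤ (lam v / 2) ^ (1 / a) * S / (2 * n) →
      lam v / 2 < gdrift a lam (f t) v := by
    intro v t ht ht' hb
    classical
    have hlv : 0 < lam v := hlam v
    have hlv1 : lam v ≤ 1 := by
      refine le_trans ?_ hsub
      exact Finset.single_le_sum (fun w _ => (hlam w).le) (Finset.mem_univ v)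
    -- pigeonhole: some coordinate is at least S/(2n)
    obtain ⟨w, -, hw⟩ : ∃ w ∈ Finset.univ, S / (2 * n) ≤ f t w := by
      apply Finset.exists_le_of_sum_le Finset.univ_nonempty
      rw [Finset.sum_const, Finset.card_univ, nsmul_eq_mul]
      have : n * (S / (2 * n)) = S / 2 := by field_simp
      rw [this]
      exact hsum2 t ht ht'
    have hSn : 0 < S / (2 * n) := by positivity
    have hr1 : (lam v / 2) ^ (1 / a) < 1 :=
      Real.rpow_lt_one (by linarith) (by linarith) (by positivity)
    have hBlt : (lam v / 2) ^ (1 / a) * S / (2 * n) < S / (2 * n) := by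
      rw [mul_div_assoc]
      nlinarith [Real.rpow_nonneg (show (0:ℝ) ≤ lam v / 2 by linarith) (1/a)]
    have hwv : w ≠ v := by
      intro h; rw [h] at hw; linarith
    set c : ℝ := (S / (2 * n)) ^ a with hc_def
    set x : ℝ := f t v ^ a with hx_def
    have hc : 0 < c := Real.rpow_pos_of_pos hSn a
    have hx0 : 0 ≤ x := Real.rpow_nonneg (hpos t ht.le v) a
    have hx_le : x ≤ lam v / 2 * c := by
      have h1 : x ≤ ((lam v / 2) ^ (1 / a) * (S / (2 * n))) ^ a := by
        apply Real.rpow_le_rpow (hpos t ht.le v) _ ha.le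
        rw [← mul_div_assoc]; exact hb
      have h2 : ((lam v / 2) ^ (1 / a) * (S / (2 * n))) ^ a
          = (lam v / 2) * c := by
        rw [Real.mul_rpow (Real.rpow_nonneg (by linarith) _) hSn.le,
          ← Real.rpow_mul (by linarith : (0:ℝ) ≤ lam v / 2),
          one_div_mul_cancel ha.ne', Real.rpow_one]
      rw [h2] at h1; exact h1
    have hwc : c ≤ f t w ^ a := Real.rpow_le_rpow hSn.le hw ha.le
    set T : ℝ := ∑ u, f t u ^ a with hT_def
    have hT : x + c ≤ T := by
      have h1 : ∑ u ∈ ({v, w} : Finset V), f t u ^ a ≤ T := by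
        apply Finset.sum_le_sum_of_subset_of_nonneg (Finset.subset_univ _)
        intro u _ _; exact Real.rpow_nonneg (hpos t ht.le u) a
      rw [Finset.sum_pair (Ne.symm hwv)] at h1
      linarith
    have hT0 : 0 < T := by linarith
    have hmain : 2 * x < lam v * T := by
      rcases eq_or_lt_of_le hx0 with h | h
      · nlinarith
      · nlinarith
    have hxt : x / T < lam v / 2 := by rw [div_lt_iff₀ hT0]; linarith
    show lam v / 2 < lam v - x / T
    linarith
  constructor
  · refine ⟨S / 2, half_pos hS, ?_⟩
    intro v t1 ht1 ht1'
    by_contra hcon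
    push_neg at hcon
    have hlv := hlam v
    set B : ℝ := (lam v / 2) ^ (1 / a) * S / (2 * n) with hB_def
    have hB : 0 < B := by
      rw [hB_def]
      have h1 : 0 < (lam v / 2) ^ (1 / a) :=
        Real.rpow_pos_of_pos (by linarith) _
      positivity
    set g : ℝ → ℝ := fun s => f s v with hg_def
    have hgt1 : g t1 ≤ 0 := hcon
    have hgcont : ContinuousOn g (Set.Icc 0 t1) :=
      ((continuous_apply v).comp_continuousOn hcont).mono (fun s hs => hs.1)
    have mono : ∀ τ, 0 ≤ τ → τ < t1 → (∀ s, τ < s → s < t1 → g s < B) →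
        g τ < g t1 := by
      intro τ hτ0 hτt hsmall
      have hmono : StrictMonoOn g (Set.Icc τ t1) := by
        apply strictMonoOn_of_deriv_pos (convex_Icc τ t1)
        · exact hgcont.mono (Set.Icc_subset_Icc_left hτ0)
        · intro s hs
          rw [interior_Icc] at hs
          have hs0 : 0 < s := lt_of_le_of_lt hτ0 hs.1
          have hsS : s ≤ S / 2 := le_trans hs.2.le ht1'
          rw [show deriv g = deriv (fun s => f s v) from rfl,
            (hDa s hs0 hsS v).deriv]
          have := key v s hs0 hsS (hsmall s hs.1 hs.2).le
          linarith
      exact hmono (Set.left_mem_Icc.2 hτt.le) (Set.right_mem_Icc.2 hτt.le) hτt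
    set A : Set ℝ := Set.Icc 0 t1 ∩ g ⁻¹' (Set.Ici B) with hA_def
    rcases A.eq_empty_or_nonempty with hA | hA
    · have h0 : g 0 < g t1 := by
        apply mono 0 le_rfl ht1
        intro s hs hst
        by_contra hge
        push_neg at hge
        exact Set.eq_empty_iff_forall_notMem.1 hA s ⟨⟨hs.le, hst.le⟩, hge⟩
      have hg0 : g 0 = q0 v := by simp only [hg_def]; rw [hf0]
      rw [hg0] at h0
      have := hq0 v
      linarith
    · have hclosed : IsClosed A :=
        hgcont.preimage_isClosed_of_isClosed isClosed_Icc isClosed_Ici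
      have hbdd : BddAbove A := ⟨t1, fun s hs => hs.1.2⟩
      have hmem : sSup A ∈ A := hclosed.csSup_mem hA hbdd
      set τ := sSup A with hτ_def
      have hτB : B ≤ g τ := hmem.2
      have hτlt : τ < t1 := by
        rcases lt_or_eq_of_le hmem.1.2 with h | h
        · exact h
        · rw [h] at hτB; linarith
      have h0 : g τ < g t1 := by
        apply mono τ hmem.1.1 hτlt
        intro s hsτ hst
        by_contra hge
        push_neg at hge
        have hsA : s ∈ A := ⟨⟨le_trans hmem.1.1 hsτ.le, hst.le⟩, hge⟩
        exact absurd (le_csSup hbdd hsA) (not_le.2 hsτ)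
      linarith
  · refine ⟨S / 2, half_pos hS, 1, one_pos, ?_⟩
    intro v _ t ht ht' hb
    rw [(hDa t ht ht' v).deriv]
    exact key v t ht ht' hb
end
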